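/- arXiv:2506.06446 — 9 statements merged into one kernel-verified Lean document; each statement's English description precedes it below -/
import Mathlib

section
/- Let (Σ, V, enc, dec) be a tokenizer where V contains, for each character c of Σ, a token decoding to the single-character string [c], dec is injective, and enc is the greedy (Wordpiece) encoder. Then the tokenizer is non-recovering: for every token sequence s ∈ V⁺ with enc(dec(s)) ≠ s and every token t ∈ V, it holds that enc(dec(s ++ [t])) ≠ s ++ [t]. -/
/-- A tokenizer whose encoder is the greedy (Wordpiece) encoder is
non-recovering: if `enc (dec s) ≠ s` then `enc (dec (s ++ [t])) ≠ s ++ [t]`. -/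
theorem wordpiece_non_recovering
    {Sig V : Type*}
    (dec : V → List Sig) (enc : List Sig → List V)
    -- each token decodes to a nonempty string
    (hdec_ne : ∀ t : V, dec t ≠ [])
    -- `dec` is injective
    (hdec_inj : Function.Injective dec)
    -- `V` contains a single-character token for each character of `Sig`
    (hsingle : ∀ c : Sig, ∃ t : V, dec t = [c])
    -- `enc` is the greedy (Wordpiece) encoder: the first token is the (unique) one
    -- whose decoding is the longest prefix of `σ` among decodings of tokens, and the
    -- remaining suffix is encoded recursively (nothing is left when the prefix is all of `σ`)
    (hgreedy : ∀ σ : List Sig, σ ≠ [] →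
      ∃ t : V, (dec t) <+: σ ∧
        (∀ t' : V, (dec t') <+: σ → (dec t').length ≤ (dec t).length) ∧
        enc σ = t :: (if (dec t).length = σ.length then ([] : List V)
                      else enc (σ.drop (dec t).length)))
    -- `s` is a nonempty, non-canonical token sequence
    (s : List V) (hs : s ≠ []) (hnc : enc (s.flatMap dec) ≠ s)
    (t : V) :
    enc ((s ++ [t]).flatMap dec) ≠ s ++ [t] := by
  intro hcan
  apply hnc
  rw [List.flatMap_append] at hcan
  simp only [List.flatMap_cons, List.flatMap_nil, List.append_nil] at hcan
  clear hnc
  induction s with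
  | nil => exact absurd rfl hs
  | cons a s' ih =>
    simp only [List.flatMap_cons, List.append_assoc, List.cons_append] at hcan
    -- greedy on the full string σ₂ = dec a ++ (flatMap dec s' ++ dec t)
    obtain ⟨t₂, hpre₂, hmax₂, henc₂⟩ :=
      hgreedy (dec a ++ (s'.flatMap dec ++ dec t))
        (by simp [hdec_ne a])
    rw [henc₂] at hcan
    obtain ⟨hta, htail⟩ := List.cons_eq_cons.mp hcan
    subst hta
    have hcond : ¬ ((dec t₂).length = (dec t₂ ++ (s'.flatMap dec ++ dec t)).length) := by
      intro h
      rw [if_pos h] at htail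
      exact (List.append_ne_nil_of_right_ne_nil s' (by simp)) htail.symm
    rw [if_neg hcond, List.drop_left] at htail
    -- htail : enc (flatMap dec s' ++ dec t) = s' ++ [t]
    rcases eq_or_ne s' [] with rfl | hs'
    · -- goal : enc (flatMap dec [t₂]) = [t₂]
      simp only [List.flatMap_cons, List.flatMap_nil, List.append_nil] at *
      obtain ⟨t₁, hpre₁, hmax₁, henc₁⟩ := hgreedy (dec t₂) (hdec_ne t₂)
      have hle : (dec t₁).length ≤ (dec t₂).length :=
        hmax₂ t₁ (hpre₁.trans (List.prefix_append _ _))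
      have hge : (dec t₂).length ≤ (dec t₁).length := hmax₁ t₂ List.prefix_rfl
      have heq : dec t₁ = dec t₂ := hpre₁.eq_of_length (le_antisymm hle hge)
      have ht1 : t₁ = t₂ := hdec_inj heq
      subst ht1
      rw [henc₁, if_pos (by rw [heq])]
    · -- s' nonempty
      have hflat : s'.flatMap dec ≠ [] := by
        cases s' with
        | nil => exact absurd rfl hs'
        | cons b s'' =>
          simp only [List.flatMap_cons, ne_eq, List.append_eq_nil_iff]
          intro h; exact hdec_ne b h.1
      have hcan' := ih hs' htail
      simp only [List.flatMap_cons]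
      obtain ⟨t₁, hpre₁, hmax₁, henc₁⟩ :=
        hgreedy (dec t₂ ++ s'.flatMap dec) (by simp [hdec_ne t₂])
      have hle : (dec t₁).length ≤ (dec t₂).length :=
        hmax₂ t₁ (by
          have : dec t₂ ++ s'.flatMap dec <+: dec t₂ ++ (s'.flatMap dec ++ dec t) := by
            rw [← List.append_assoc]; exact List.prefix_append _ _
          exact hpre₁.trans this)
      have hge : (dec t₂).length ≤ (dec t₁).length :=
        hmax₁ t₂ (List.prefix_append _ _)
      have heq : dec t₁ = dec t₂ :=
        (List.prefix_of_prefix_length_le hpre₁ (List.prefix_append _ _) hle).eq_of_length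
          (le_antisymm hle hge)
      have ht1 : t₁ = t₂ := hdec_inj heq
      subst ht1
      have hcond₁ : ¬ ((dec t₁).length = (dec t₁ ++ s'.flatMap dec).length) := by
        simp only [List.length_append]
        intro h
        have := List.length_pos_iff.mpr hflat
        omega
      rw [henc₁, if_neg hcond₁, List.drop_left, hcan']
end

section
/- Let dec : V → Σ⁺ assign each token a nonempty string and let r : V → (0, ∞) be a score function, extended multiplicatively to token sequences by r(t₁, …, tₙ) = r(t₁)⋯r(tₙ). Suppose s ∈ V⁺ is a token sequence for which there exists a tokenization s' of dec(s) (i.e., dec(s') = dec(s)) with r(s') > r(s). Then for every token t ∈ V there exists a tokenization s'' of dec(s ++ [t]) with r(s'') > r(s ++ [t]). Consequently, if the Unigram encoder enc maps each string σ to its (assumed unique) score-maximizing tokenization, then the resulting tokenizer is non-recovering: if enc(dec(s)) ≠ s then enc(dec(s ++ [t])) ≠ s ++ [t] for every t ∈ V. -/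
/-- If a token sequence `s` admits a strictly better-scoring tokenization of
the same string, then so does `s ++ [t]` for every token `t`; consequently a Unigram
tokenizer (whose encoder returns the unique score-maximizing tokenization) is
non-recovering. -/
theorem unigram_non_recovering
    {Sig V : Type*}
    (dec : V → List Sig)
    -- each token decodes to a nonempty string
    (hdec_ne : ∀ t : V, dec t ≠ [])
    -- positive score function, extended multiplicatively to token sequences
    (r : V → ℝ) (hr : ∀ t : V, 0 < r t)
    (rSeq : List V → ℝ) (hrSeq : ∀ s : List V, rSeq s = (s.map r).prod)
    -- `s` is a nonempty token sequence admitting a strictly better tokenization of `dec s`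
    (s : List V) (hs : s ≠ [])
    (h : ∃ s' : List V, s'.flatMap dec = s.flatMap dec ∧ rSeq s < rSeq s') :
    -- (a) every one-token extension of `s` also admits a strictly better tokenization
    (∀ t : V, ∃ s'' : List V,
        s''.flatMap dec = (s ++ [t]).flatMap dec ∧ rSeq (s ++ [t]) < rSeq s'') ∧
    -- (b) consequently, any encoder mapping each nonempty string to its unique
    -- score-maximizing tokenization is non-recovering at `s`
    (∀ enc : List Sig → List V,
        (∀ σ : List Sig, σ ≠ [] →
          (enc σ).flatMap dec = σ ∧
          (∀ s' : List V, s'.flatMap dec = σ → s' ≠ enc σ → rSeq s' < rSeq (enc σ))) →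
        enc (s.flatMap dec) ≠ s →
        ∀ t : V, enc ((s ++ [t]).flatMap dec) ≠ s ++ [t]) := by
  obtain ⟨s', hflat, hlt⟩ := h
  have key : ∀ t : V, ∃ s'' : List V,
      s''.flatMap dec = (s ++ [t]).flatMap dec ∧ rSeq (s ++ [t]) < rSeq s'' := by
    intro t
    refine ⟨s' ++ [t], ?_, ?_⟩
    · simp [List.flatMap_append, hflat]
    · have hm : ∀ l : List V, rSeq (l ++ [t]) = rSeq l * r t := by
        intro l; simp [hrSeq]
      rw [hm, hm]
      exact mul_lt_mul_of_pos_right hlt (hr t)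
  refine ⟨key, ?_⟩
  intro enc henc _ t hEq
  obtain ⟨s'', hflat'', hlt''⟩ := key t
  have hσne : (s ++ [t]).flatMap dec ≠ [] := by
    simp [List.flatMap_append, hdec_ne t]
  obtain ⟨_, hmax⟩ := henc _ hσne
  rcases eq_or_ne s'' (enc ((s ++ [t]).flatMap dec)) with h1 | h1
  · rw [h1, hEq] at hlt''; exact lt_irrefl _ hlt''
  · have := hmax s'' hflat'' h1
    rw [hEq] at this
    exact lt_irrefl _ (this.trans hlt'')
end

section
/- Let (Σ, V, enc, dec) be a BPE tokenizer, where enc is the BPE encoder determined by an ordered list R of merge rules. Then the tokenizer is non-recovering: for every token sequence s ∈ V⁺ with enc(dec(s)) ≠ s and every token t ∈ V, it holds that enc(dec(s ++ [t])) ≠ s ++ [t]. -/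
/-! Merges only ever join adjacent tokens, so a token boundary present at the end of a BPE run
is present throughout the run. If `s ++ [t]` were canonical, the boundary between `dec s` and
`dec t` would therefore persist through the run on `dec s ++ dec t`, and every merge of that run
would either lie to the right of it or, because BPE applies the earliest rule at its leftmost
position, be exactly the step BPE takes on `dec s` alone. So the run on `dec s` reaches `s`,
which admits no further merge (its extension `s ++ [t]` admits none), and `enc (dec s) = s`. -/

namespace BPEStmt2

variable {V : Type*} [DecidableEq V]

/-- Apply the merge rule `r = (t, t', tMerged)` at its leftmost applicable position in the
token sequence, if any: the leftmost adjacent pair `(t, t')` is replaced by `tMerged`. -/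
def applyRule (r : V × V × V) : List V → Option (List V)
  | [] => none
  | [_] => none
  | a :: b :: rest =>
    if a = r.1 ∧ b = r.2.1 then some (r.2.2 :: rest)
    else (applyRule r (b :: rest)).map (a :: ·)

/-- One BPE step: apply the earliest applicable rule in the ordered list `R`, at its
leftmost applicable position. -/
def stepBPE (R : List (V × V × V)) (s : List V) : Option (List V) :=
  R.findSome? fun r => applyRule r s

/-- Repeatedly perform BPE steps (with enough fuel) until no rule applies. -/
def bpeLoop (R : List (V × V × V)) : ℕ → List V → List V
  | 0, s => s
  | n + 1, s =>
    match stepBPE R s with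
    | none => s
    | some s' => bpeLoop R n s'

/-- The BPE encoder determined by the ordered list of merge rules `R`: start from the
sequence of single-character tokens spelling `σ` and repeatedly apply, until no rule
applies, the earliest applicable rule of `R` at its leftmost applicable position.
(Each application shortens the sequence, so `σ.length` steps of fuel suffice.) -/
def bpeEnc {Sig : Type*} (R : List (V × V × V)) (toTok : Sig → V) (σ : List Sig) : List V :=
  bpeLoop R σ.length (σ.map toTok)

section ListLemmas
variable {α β : Type*} {f : α → List β}

theorem head?_append_cons (p q : List α) (b : α) : (p ++ b :: q).head? = (p ++ [b]).head? := by
  cases p <;> rfl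

theorem eq_of_append_eq_append_of_flatMap_eq (hf : ∀ a, f a ≠ []) {u v u' v' : List α}
    (h : u ++ v = u' ++ v') (hflat : u.flatMap f = u'.flatMap f) : u = u' := by
  have eq_nil : ∀ {w : List α}, w.flatMap f = [] → w = [] := fun hw =>
    List.eq_nil_iff_forall_not_mem.mpr fun a ha => hf a (List.flatMap_eq_nil_iff.mp hw a ha)
  rcases List.append_eq_append_iff.mp h with ⟨w, rfl, -⟩ | ⟨w, rfl, -⟩
  · simp [eq_nil (by simpa using hflat)]
  · simp [eq_nil (by simpa using hflat.symm)]

-- No prefix of a tokenization decodes to a string that ends strictly inside one of its tokens.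
theorem flatMap_ne_append_of_append_eq_append_cons {p q u v : List α} {c : α} {x y : List β}
    (h : u ++ v = p ++ c :: q) (hc : f c = x ++ y) (hx : x ≠ []) (hy : y ≠ []) :
    u.flatMap f ≠ p.flatMap f ++ x := by
  intro hflat
  rcases List.append_eq_append_iff.mp h with ⟨w, rfl, -⟩ | ⟨w, rfl, hw⟩
  · simp [hx] at hflat
  · rcases List.cons_eq_append_iff.mp hw with ⟨rfl, -⟩ | ⟨w', rfl, -⟩
    · simp [hx] at hflat
    · simp [hc, hy] at hflat

end ListLemmas

variable {r : V × V × V} {R : List (V × V × V)}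

theorem applyRule_cons (a : V) (z : List V) :
    applyRule r (a :: z) =
      if a = r.1 ∧ z.head? = some r.2.1 then some (r.2.2 :: z.tail)
      else (applyRule r z).map (a :: ·) := by
  cases z <;> simp [applyRule]

-- `applyRule r (p ++ [r.1]) = none` says that the occurrence after `p` is the leftmost one.
theorem applyRule_eq_some_iff {z z' : List V} :
    applyRule r z = some z' ↔ ∃ p q, z = p ++ r.1 :: r.2.1 :: q ∧ z' = p ++ r.2.2 :: q ∧
      applyRule r (p ++ [r.1]) = none := by
  constructor
  · induction z generalizing z' with
    | nil => simp [applyRule]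
    | cons a z ih =>
      rw [applyRule_cons]
      split_ifs with hmatch
      · rintro ⟨⟩
        obtain ⟨rfl, hz⟩ := hmatch
        obtain ⟨q, rfl⟩ : ∃ q, z = r.2.1 :: q := by
          cases z <;> simp_all
        exact ⟨[], q, rfl, rfl, rfl⟩
      · rw [Option.map_eq_some_iff]
        rintro ⟨w, hw, rfl⟩
        obtain ⟨p, q, rfl, rfl, hleft⟩ := ih hw
        refine ⟨a :: p, q, rfl, rfl, ?_⟩
        rw [List.cons_append, applyRule_cons, ← head?_append_cons p (r.2.1 :: q),
          if_neg hmatch, hleft]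
        rfl
  · rintro ⟨p, q, rfl, rfl, hleft⟩
    induction p with
    | nil => simp [applyRule]
    | cons a p ih =>
      rw [List.cons_append, applyRule_cons] at hleft ⊢
      rw [head?_append_cons]
      split_ifs at hleft ⊢ with hmatch
      rw [Option.map_eq_none_iff] at hleft
      rw [ih hleft]
      rfl

theorem applyRule_append_of_eq_some {x w : List V} (y : List V) (h : applyRule r x = some w) :
    applyRule r (x ++ y) = some (w ++ y) := by
  obtain ⟨p, q, rfl, rfl, hleft⟩ := applyRule_eq_some_iff.mp h
  exact applyRule_eq_some_iff.mpr ⟨p, q ++ y, by simp, by simp, hleft⟩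

theorem applyRule_eq_none_of_append {x y : List V} (h : applyRule r (x ++ y) = none) :
    applyRule r x = none :=
  Option.eq_none_iff_forall_ne_some.mpr fun w hw => by
    simp [applyRule_append_of_eq_some y hw] at h

theorem length_of_applyRule_eq_some {z z' : List V} (h : applyRule r z = some z') :
    z.length = z'.length + 1 := by
  obtain ⟨p, q, rfl, rfl, -⟩ := applyRule_eq_some_iff.mp h
  simp only [List.length_append, List.length_cons]
  omega

theorem stepBPE_eq_none_of_append {x y : List V} (h : stepBPE R (x ++ y) = none) :
    stepBPE R x = none := by
  rw [stepBPE, List.findSome?_eq_none_iff] at h ⊢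
  exact fun r hr => applyRule_eq_none_of_append (h r hr)

theorem length_of_stepBPE_eq_some {z z' : List V} (h : stepBPE R z = some z') :
    z.length = z'.length + 1 := by
  obtain ⟨-, r, -, -, hr, -⟩ := List.findSome?_eq_some_iff.mp h
  exact length_of_applyRule_eq_some hr

abbrev Reaches (R : List (V × V × V)) : List V → List V → Prop :=
  Relation.ReflTransGen fun z z' => stepBPE R z = some z'

theorem reaches_bpeLoop (n : ℕ) (z : List V) : Reaches R z (bpeLoop R n z) := by
  induction n generalizing z with
  | zero => exact .refl
  | succ n ih =>
    rw [bpeLoop]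
    split
    · exact .refl
    · exact .head ‹_› (ih _)

theorem stepBPE_bpeLoop_eq_none {n : ℕ} {z : List V} (hn : z.length ≤ n) :
    stepBPE R (bpeLoop R n z) = none := by
  induction n generalizing z with
  | zero =>
    rw [List.length_eq_zero_iff.mp (Nat.le_zero.mp hn)]
    simp [bpeLoop, stepBPE, applyRule]
  | succ n ih =>
    rw [bpeLoop]
    split
    · assumption
    · exact ih (by have := length_of_stepBPE_eq_some ‹_›; omega)

theorem bpeLoop_eq_of_reaches {n : ℕ} {z w : List V} (hzw : Reaches R z w)
    (hw : stepBPE R w = none) (hn : z.length ≤ n) : bpeLoop R n z = w := by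
  induction hzw using Relation.ReflTransGen.head_induction_on generalizing n with
  | refl => cases n <;> simp [bpeLoop, hw]
  | head hstep _ ih =>
    have hlen := length_of_stepBPE_eq_some hstep
    obtain ⟨n, rfl⟩ : ∃ m, n = m + 1 := ⟨n - 1, by omega⟩
    rw [bpeLoop, hstep]
    exact ih (by omega)

section Decoding
variable {Sig : Type*} {dec : V → List Sig}

theorem exists_append_of_applyRule_eq_some_append (hr : dec r.2.2 = dec r.1 ++ dec r.2.1)
    {z u' v' : List V} (h : applyRule r z = some (u' ++ v')) :
    ∃ u v, z = u ++ v ∧ u.flatMap dec = u'.flatMap dec := by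
  obtain ⟨p, q, rfl, hz', -⟩ := applyRule_eq_some_iff.mp h
  rcases List.append_eq_append_iff.mp hz' with ⟨w, rfl, -⟩ | ⟨w, rfl, hw⟩
  · exact ⟨u', w ++ r.1 :: r.2.1 :: q, by simp, rfl⟩
  · rcases List.cons_eq_append_iff.mp hw with ⟨rfl, -⟩ | ⟨w', rfl, rfl⟩
    · exact ⟨p, r.1 :: r.2.1 :: q, by simp, by simp⟩
    · exact ⟨p ++ r.1 :: r.2.1 :: w', v', by simp, by simp [hr]⟩

theorem eq_or_applyRule_eq_some_of_append (hdec : ∀ t, dec t ≠ [])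
    (hr : dec r.2.2 = dec r.1 ++ dec r.2.1) {u v u' v' : List V}
    (h : applyRule r (u ++ v) = some (u' ++ v')) (hflat : u'.flatMap dec = u.flatMap dec) :
    u' = u ∨ applyRule r u = some u' := by
  obtain ⟨p, q, huv, hz', hleft⟩ := applyRule_eq_some_iff.mp h
  rcases List.append_eq_append_iff.mp huv with ⟨w, rfl, -⟩ | ⟨w, rfl, hw⟩
  · exact .inl <| eq_of_append_eq_append_of_flatMap_eq hdec
      (hz'.trans (List.append_assoc _ _ _)) hflat
  rcases List.cons_eq_append_iff.mp hw with ⟨rfl, -⟩ | ⟨w', rfl, hw'⟩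
  · exact .inl <| eq_of_append_eq_append_of_flatMap_eq hdec (v' := r.2.2 :: q)
      (by rw [hz', List.append_nil]) hflat
  rcases List.cons_eq_append_iff.mp hw' with ⟨rfl, -⟩ | ⟨w'', rfl, rfl⟩
  · -- a merge across the cut would make `u'` decode to a string ending inside a token
    exact absurd (by simpa using hflat)
      (flatMap_ne_append_of_append_eq_append_cons hz' hr (hdec _) (hdec _))
  · have hu : applyRule r (p ++ r.1 :: r.2.1 :: w'') = some (p ++ r.2.2 :: w'') :=
      applyRule_eq_some_iff.mpr ⟨p, w'', rfl, rfl, hleft⟩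
    refine .inr (hu.trans (congrArg some ?_))
    exact eq_of_append_eq_append_of_flatMap_eq hdec (by simpa using hz'.symm) (by simp [hflat, hr])

theorem exists_append_of_stepBPE_eq_some_append
    (hR : ∀ r ∈ R, dec r.2.2 = dec r.1 ++ dec r.2.1) {z u' v' : List V}
    (h : stepBPE R z = some (u' ++ v')) :
    ∃ u v, z = u ++ v ∧ u.flatMap dec = u'.flatMap dec := by
  obtain ⟨R₁, r, R₂, rfl, hr, -⟩ := List.findSome?_eq_some_iff.mp h
  exact exists_append_of_applyRule_eq_some_append (hR r (by simp)) hr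

theorem eq_or_stepBPE_eq_some_of_append (hdec : ∀ t, dec t ≠ [])
    (hR : ∀ r ∈ R, dec r.2.2 = dec r.1 ++ dec r.2.1) {u v u' v' : List V}
    (h : stepBPE R (u ++ v) = some (u' ++ v')) (hflat : u'.flatMap dec = u.flatMap dec) :
    u' = u ∨ stepBPE R u = some u' := by
  obtain ⟨R₁, r, R₂, rfl, hr, hearlier⟩ := List.findSome?_eq_some_iff.mp h
  refine (eq_or_applyRule_eq_some_of_append hdec (hR r (by simp)) hr hflat).imp_right
    fun hu => List.findSome?_eq_some_iff.mpr
      ⟨R₁, r, R₂, rfl, hu, fun x hx => applyRule_eq_none_of_append (hearlier x hx)⟩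

theorem Reaches.exists_append_left (hdec : ∀ t, dec t ≠ [])
    (hR : ∀ r ∈ R, dec r.2.2 = dec r.1 ++ dec r.2.1) {z u₀ v₀ : List V}
    (h : Reaches R z (u₀ ++ v₀)) :
    ∃ u v, z = u ++ v ∧ u.flatMap dec = u₀.flatMap dec ∧ Reaches R u u₀ := by
  induction h using Relation.ReflTransGen.head_induction_on with
  | refl => exact ⟨u₀, v₀, rfl, rfl, .refl⟩
  | head hstep _ ih =>
    obtain ⟨u', v', rfl, hflat', hreach⟩ := ih
    obtain ⟨u, v, rfl, hflat⟩ := exists_append_of_stepBPE_eq_some_append hR hstep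
    refine ⟨u, v, rfl, hflat.trans hflat', ?_⟩
    rcases eq_or_stepBPE_eq_some_of_append hdec hR hstep hflat.symm with rfl | hu
    · exact hreach
    · exact .head hu hreach

end Decoding

theorem bpe_non_recovering_general
    {Sig : Type*}
    (dec : V → List Sig)
    -- each token decodes to a nonempty string
    (hdec_ne : ∀ t : V, dec t ≠ [])
    -- `V` contains a single-character token for each character of `Sig`
    (toTok : Sig → V) (htok : ∀ c : Sig, dec (toTok c) = [c])
    -- the ordered list of merge rules: each rule `(t, t', tMerged)` replaces the adjacent
    -- pair `(t, t')` by the token `tMerged`, which decodes to `dec t ++ dec t'`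
    (R : List (V × V × V)) (hR : ∀ r ∈ R, dec r.2.2 = dec r.1 ++ dec r.2.1)
    -- `enc` is the BPE encoder determined by `R`
    (enc : List Sig → List V) (henc : ∀ σ : List Sig, enc σ = bpeEnc R toTok σ)
    -- `s` is a nonempty, non-canonical token sequence
    (s : List V) (hnc : enc (s.flatMap dec) ≠ s)
    (t : V) :
    enc ((s ++ [t]).flatMap dec) ≠ s ++ [t] := by
  intro hcan
  apply hnc
  rw [henc, bpeEnc] at hcan ⊢
  have hrun := hcan ▸ reaches_bpeLoop (R := R) _ (((s ++ [t]).flatMap dec).map toTok)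
  have hstuck := hcan ▸ stepBPE_bpeLoop_eq_none (R := R) (List.length_map toTok).le
  rw [List.flatMap_append, List.map_append] at hrun
  obtain ⟨u, v, huv, hflat, hreach⟩ := hrun.exists_append_left hdec_ne hR
  obtain rfl : (s.flatMap dec).map toTok = u :=
    eq_of_append_eq_append_of_flatMap_eq hdec_ne huv (by simp [hflat, List.flatMap_map, htok])
  exact bpeLoop_eq_of_reaches hreach (stepBPE_eq_none_of_append hstuck) (List.length_map toTok).le

/-- a BPE tokenizer is non-recovering: for every nonempty token sequence `s`
with `enc (dec s) ≠ s` and every token `t`, it holds that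
`enc (dec (s ++ [t])) ≠ s ++ [t]`. -/
theorem bpe_non_recovering
    {Sig : Type*}
    (dec : V → List Sig)
    -- each token decodes to a nonempty string
    (hdec_ne : ∀ t : V, dec t ≠ [])
    -- `V` contains a single-character token for each character of `Sig`
    (toTok : Sig → V) (htok : ∀ c : Sig, dec (toTok c) = [c])
    -- the ordered list of merge rules: each rule `(t, t', tMerged)` replaces the adjacent
    -- pair `(t, t')` by the token `tMerged`, which decodes to `dec t ++ dec t'`
    (R : List (V × V × V)) (hR : ∀ r ∈ R, dec r.2.2 = dec r.1 ++ dec r.2.1)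
    -- `enc` is the BPE encoder determined by `R`
    (enc : List Sig → List V) (henc : ∀ σ : List Sig, enc σ = bpeEnc R toTok σ)
    -- `s` is a nonempty, non-canonical token sequence
    (s : List V) (hs : s ≠ []) (hnc : enc (s.flatMap dec) ≠ s)
    (t : V) :
    enc ((s ++ [t]).flatMap dec) ≠ s ++ [t] :=
  bpe_non_recovering_general dec hdec_ne toTok htok R hR enc henc s hnc t

end BPEStmt2
end

section
/- Let s ∈ V⁺ be a tokenization of σ ∈ Σ⁺ obtained by applying a merge sequence M, and let s = s₁ ‖ … ‖ sₙ be any partition of s into nonempty contiguous token subsequences. Then every merge m of M belongs to [M]_{sᵢ} for some i ∈ {1, …, n}. -/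
namespace BPEMerges5

/-- A merge `m = (r, i, j)` records one application of the merge rule `r` (a triple
`(t, t', t∘t')`) to two adjacent tokens that together span the substring of the underlying
string from character position `i` to character position `j` (1-indexed, inclusive). -/
structure Merge (V : Type*) where
  rule : V × V × V
  i : ℕ
  j : ℕ

variable {Sig V : Type*}

/-- One merge step on a list of tokens annotated with the (1-indexed, inclusive) character
spans they cover: the merge `m` replaces the adjacent annotated tokens
`(m.rule.1, m.i, k)` and `(m.rule.2.1, k+1, m.j)` by `(m.rule.2.2, m.i, m.j)`, where
`m.rule` belongs to the rule list `R`. -/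
def MergeStep (R : List (V × V × V)) (m : Merge V)
    (L L' : List (V × ℕ × ℕ)) : Prop :=
  m.rule ∈ R ∧ ∃ (pre post : List (V × ℕ × ℕ)) (k : ℕ),
    L = pre ++ [(m.rule.1, m.i, k), (m.rule.2.1, k + 1, m.j)] ++ post ∧
    L' = pre ++ [(m.rule.2.2, m.i, m.j)] ++ post

/-- Applying a merge sequence: performing its merges in order. -/
def ApplySeq (R : List (V × V × V)) :
    List (Merge V) → List (V × ℕ × ℕ) → List (V × ℕ × ℕ) → Prop
  | [], L, L' => L = L'
  | m :: M, L, L' => ∃ L₁, MergeStep R m L L₁ ∧ ApplySeq R M L₁ L'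

/-- The initial annotated state for the string `σ`: the sequence of single-character tokens
spelling `σ`, the `k`-th (0-indexed) token spanning character position `k+1`. -/
def initState (toTok : Sig → V) (σ : List Sig) : List (V × ℕ × ℕ) :=
  σ.zipIdx.map fun p => (toTok p.1, p.2 + 1, p.2 + 1)

/-- The first character position spanned by a (nonempty) annotated token list. -/
def spanLo (P : List (V × ℕ × ℕ)) : ℕ := (P.head?.map fun e => e.2.1).getD 0

/-- The last character position spanned by a (nonempty) annotated token list. -/
def spanHi (P : List (V × ℕ × ℕ)) : ℕ := (P.getLast?.map fun e => e.2.2).getD 0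

/-- `[M]_{s'}` for a contiguous token subsequence spanning character positions `u` to `v`:
the subsequence of merges `(r, i, j)` of `M` with `u ≤ i < j ≤ v`. -/
def restrict (M : List (Merge V)) (u v : ℕ) : List (Merge V) :=
  M.filter fun m => u ≤ m.i ∧ m.i < m.j ∧ m.j ≤ v

/-!
Along a merge sequence the annotated tokens always have nonempty spans listed from left to
right, and a merge replaces two adjacent tokens by one spanning both, so tokens only grow.
Hence the span of every merge lies inside one token of the final tokenization, and that token
lies inside a single part `P`, whose tokens all lie between `spanLo P` and `spanHi P`.
-/

def SpansOrdered (L : List (V × ℕ × ℕ)) : Prop :=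
  (∀ e ∈ L, e.2.1 ≤ e.2.2) ∧ L.Pairwise fun a b => a.2.2 < b.2.1

def Covers (L : List (V × ℕ × ℕ)) (i j : ℕ) : Prop :=
  ∃ e ∈ L, e.2.1 ≤ i ∧ j ≤ e.2.2

lemma SpansOrdered.sublist {L L' : List (V × ℕ × ℕ)} (hL : SpansOrdered L) (h : L'.Sublist L) :
    SpansOrdered L' :=
  ⟨fun e he => hL.1 e (h.subset he), hL.2.sublist h⟩

lemma SpansOrdered.spanLo_le {P : List (V × ℕ × ℕ)} (hP : SpansOrdered P) {e : V × ℕ × ℕ}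
    (he : e ∈ P) : spanLo P ≤ e.2.1 := by
  obtain ⟨hwf, hpw⟩ := hP
  cases P with
  | nil => simp at he
  | cons f P =>
    simp only [spanLo, List.head?_cons, Option.map_some, Option.getD_some]
    rcases List.mem_cons.1 he with rfl | he
    · exact le_rfl
    · exact (hwf f List.mem_cons_self).trans (List.rel_of_pairwise_cons hpw he).le

lemma SpansOrdered.le_spanHi {P : List (V × ℕ × ℕ)} (hP : SpansOrdered P) {e : V × ℕ × ℕ}
    (he : e ∈ P) : e.2.2 ≤ spanHi P := by
  obtain ⟨hwf, hpw⟩ := hP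
  obtain rfl | ⟨P, l, rfl⟩ := P.eq_nil_or_concat'
  · simp at he
  simp only [spanHi, List.getLast?_concat, Option.map_some, Option.getD_some]
  rcases List.mem_append.1 he with he | he
  · have hel : e.2.2 < l.2.1 := (List.pairwise_append.1 hpw).2.2 e he l List.mem_cons_self
    exact hel.le.trans (hwf l (by simp))
  · rw [List.mem_singleton.1 he]

lemma pairwise_zipIdx {α : Type*} (l : List α) (n : ℕ) :
    (l.zipIdx n).Pairwise fun a b => a.2 < b.2 := by
  induction l generalizing n with
  | nil => simp
  | cons a l ih =>
    refine List.pairwise_cons.2 ⟨fun b hb => ?_, ih (n + 1)⟩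
    exact Nat.lt_of_succ_le (List.mem_zipIdx hb).1

lemma spansOrdered_initState (toTok : Sig → V) (σ : List Sig) :
    SpansOrdered (initState toTok σ) := by
  refine ⟨by simp only [initState, List.mem_map]; grind, ?_⟩
  simpa [initState, List.pairwise_map] using pairwise_zipIdx σ 0

section MergeStep

variable {R : List (V × V × V)} {m : Merge V} {L L' : List (V × ℕ × ℕ)}

lemma MergeStep.i_lt_j (h : MergeStep R m L L') (hL : SpansOrdered L) : m.i < m.j := by
  obtain ⟨-, pre, post, k, rfl, -⟩ := h
  have h₁ := hL.1 (m.rule.1, m.i, k) (by simp)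
  have h₂ := hL.1 (m.rule.2.1, k + 1, m.j) (by simp)
  dsimp at h₁ h₂
  omega

lemma MergeStep.spansOrdered (h : MergeStep R m L L') (hL : SpansOrdered L) :
    SpansOrdered L' := by
  have hij := h.i_lt_j hL
  obtain ⟨-, pre, post, k, rfl, rfl⟩ := h
  obtain ⟨hwf, hpw⟩ := hL
  refine ⟨fun e he => ?_, ?_⟩
  · simp only [List.append_assoc, List.cons_append, List.nil_append, List.mem_append,
      List.mem_cons] at he
    rcases he with he | rfl | he
    · exact hwf e (by simp [he])
    · exact hij.le
    · exact hwf e (by simp [he])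
  · simp only [List.append_assoc, List.cons_append, List.nil_append, List.pairwise_append,
      List.pairwise_cons, List.mem_cons, forall_eq_or_imp] at hpw ⊢
    grind

lemma MergeStep.covers (h : MergeStep R m L L') (hL : SpansOrdered L) {i j : ℕ}
    (hc : Covers L i j) : Covers L' i j := by
  obtain ⟨e, he, hi, hj⟩ := hc
  obtain ⟨-, pre, post, k, rfl, rfl⟩ := h
  have h₁ := hL.1 (m.rule.1, m.i, k) (by simp)
  have h₂ := hL.1 (m.rule.2.1, k + 1, m.j) (by simp)
  simp only [List.append_assoc, List.cons_append, List.nil_append, List.mem_append,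
    List.mem_cons] at he
  rcases he with he | rfl | rfl | he
  · exact ⟨e, by simp [he], hi, hj⟩
  · exact ⟨(m.rule.2.2, m.i, m.j), by simp, hi, by dsimp at *; omega⟩
  · exact ⟨(m.rule.2.2, m.i, m.j), by simp, by dsimp at *; omega, hj⟩
  · exact ⟨e, by simp [he], hi, hj⟩

lemma MergeStep.covers_self (h : MergeStep R m L L') : Covers L' m.i m.j := by
  obtain ⟨-, pre, post, k, -, rfl⟩ := h
  exact ⟨(m.rule.2.2, m.i, m.j), by simp, le_rfl, le_rfl⟩

end MergeStep

section ApplySeq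

variable {R : List (V × V × V)}

lemma ApplySeq.spansOrdered {M : List (Merge V)} {L₀ L : List (V × ℕ × ℕ)}
    (h : ApplySeq R M L₀ L) (hL₀ : SpansOrdered L₀) : SpansOrdered L := by
  induction M generalizing L₀ with
  | nil => exact (show L₀ = L from h) ▸ hL₀
  | cons m M ih =>
    obtain ⟨L₁, hstep, hrest⟩ := h
    exact ih hrest (hstep.spansOrdered hL₀)

lemma ApplySeq.covers {M : List (Merge V)} {L₀ L : List (V × ℕ × ℕ)}
    (h : ApplySeq R M L₀ L) (hL₀ : SpansOrdered L₀) {i j : ℕ} (hc : Covers L₀ i j) :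
    Covers L i j := by
  induction M generalizing L₀ with
  | nil => exact (show L₀ = L from h) ▸ hc
  | cons m M ih =>
    obtain ⟨L₁, hstep, hrest⟩ := h
    exact ih hrest (hstep.spansOrdered hL₀) (hstep.covers hL₀ hc)

lemma ApplySeq.covers_of_mem {M : List (Merge V)} {L₀ L : List (V × ℕ × ℕ)}
    (h : ApplySeq R M L₀ L) (hL₀ : SpansOrdered L₀) {m : Merge V} (hm : m ∈ M) :
    m.i < m.j ∧ Covers L m.i m.j := by
  induction M generalizing L₀ with
  | nil => simp at hm
  | cons m' M ih =>
    obtain ⟨L₁, hstep, hrest⟩ := h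
    rcases List.mem_cons.1 hm with rfl | hm
    · exact ⟨hstep.i_lt_j hL₀, hrest.covers (hstep.spansOrdered hL₀) hstep.covers_self⟩
    · exact ih hrest (hstep.spansOrdered hL₀) hm

end ApplySeq

theorem merge_subsequences_cover_general
    -- `V` contains a single-character token for each character of `Sig`
    (toTok : Sig → V)
    -- the merge rules: each rule `(t, t', tMerged)` merges `(t, t')` into `tMerged`,
    -- which decodes to `dec t ++ dec t'`
    (R : List (V × V × V))
    -- `s` is a tokenization of the nonempty string `σ` obtained by applying `M`
    (σ : List Sig)
    (M : List (Merge V)) (L : List (V × ℕ × ℕ))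
    (happly : ApplySeq R M (initState toTok σ) L)
    -- `parts` is a partition of `s` (with its annotations `L`) into nonempty contiguous
    -- token subsequences
    (parts : List (List (V × ℕ × ℕ)))
    (hjoin : parts.flatten = L) :
    ∀ m ∈ M, ∃ P ∈ parts, m ∈ restrict M (spanLo P) (spanHi P) := by
  intro m hm
  have hinit := spansOrdered_initState toTok σ
  obtain ⟨hij, e, he, hi, hj⟩ := happly.covers_of_mem hinit hm
  obtain ⟨P, hP, heP⟩ := List.mem_flatten.1 (hjoin ▸ he)
  have hPord : SpansOrdered P :=
    (happly.spansOrdered hinit).sublist (hjoin ▸ List.sublist_flatten_of_mem hP)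
  have hlo := hPord.spanLo_le heP
  have hhi := hPord.le_spanHi heP
  refine ⟨P, hP, List.mem_filter.2 ⟨hm, ?_⟩⟩
  simp only [decide_eq_true_eq]
  omega

/-- if `s` is a tokenization of `σ` obtained by applying the merge sequence
`M`, and `s` (with its annotations `L`) is partitioned into nonempty contiguous token
subsequences, then every merge of `M` belongs to `[M]_P` for some part `P`. -/
theorem merge_subsequences_cover
    (dec : V → List Sig)
    -- each token decodes to a nonempty string
    (hdec_ne : ∀ t : V, dec t ≠ [])
    -- `V` contains a single-character token for each character of `Sig`
    (toTok : Sig → V) (htok : ∀ c : Sig, dec (toTok c) = [c])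
    -- the merge rules: each rule `(t, t', tMerged)` merges `(t, t')` into `tMerged`,
    -- which decodes to `dec t ++ dec t'`
    (R : List (V × V × V)) (hR : ∀ r ∈ R, dec r.2.2 = dec r.1 ++ dec r.2.1)
    -- `s` is a tokenization of the nonempty string `σ` obtained by applying `M`
    (σ : List Sig) (hσ : σ ≠ [])
    (M : List (Merge V)) (L : List (V × ℕ × ℕ))
    (happly : ApplySeq R M (initState toTok σ) L)
    (s : List V) (hsL : s = L.map fun e => e.1)
    -- `parts` is a partition of `s` (with its annotations `L`) into nonempty contiguous
    -- token subsequences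
    (parts : List (List (V × ℕ × ℕ)))
    (hjoin : parts.flatten = L)
    (hne : ∀ P ∈ parts, P ≠ []) :
    ∀ m ∈ M, ∃ P ∈ parts, m ∈ restrict M (spanLo P) (spanHi P) :=
  merge_subsequences_cover_general toTok R σ M L happly parts hjoin

end BPEMerges5
end

section
/- Let (Σ, V, enc, dec) be a non-recovering tokenizer and let pre : Σ⁺ → List Σ⁺ be a pretokenizer satisfying: (i) the concatenation of the segments of pre(σ) equals σ and each segment is nonempty; (ii) pre(τ) = [τ] for every segment τ appearing in pre(σ) for any σ; (iii) pre is closed under prefix: if pre(σ) = [σ], then pre(σ') = [σ'] for every nonempty prefix σ' of σ; (iv) for every σ ∈ Σ⁺ with pre(σ) = (σ₁, …, σₙ) and every token t ∈ V, pre(σ ++ dec(t)) equals either (σ₁, …, σₙ, dec(t)) or (σ₁, …, σₙ₋₁, σₙ ++ dec(t)). Define enc_pre(σ) = enc(σ₁) ++ … ++ enc(σₙ) where pre(σ) = (σ₁, …, σₙ), and call s ∈ V⁺ pre-canonical if enc_pre(dec(s)) = s. Then the tokenizer (Σ, V, enc_pre, dec) is non-recovering: for every s ∈ V⁺ that is not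 pre-canonical and every token t ∈ V, the sequence s ++ [t] is not pre-canonical. -/
private lemma split_tail {V : Type*} {a b s : List V} {t : V}
    (h : a ++ b = s ++ [t]) (hb : b ≠ []) :
    ∃ r, s = a ++ r ∧ b = r ++ [t] := by
  have hlen : a.length ≤ s.length := by
    have := congrArg List.length h
    simp at this
    have : 0 < b.length := List.length_pos_iff.mpr hb
    omega
  have h1 : (a ++ b).take a.length = a := by simp
  rw [h] at h1
  have ha : s.take a.length = a := (List.take_append_of_le_length hlen).symm.trans h1
  have hs' : s = a ++ s.drop a.length := by
    conv_lhs => rw [← List.take_append_drop a.length s, ha]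
  refine ⟨s.drop a.length, hs', ?_⟩
  have h2 : a ++ b = a ++ (s.drop a.length ++ [t]) := by
    rw [h]
    conv_lhs => rw [hs']
    simp
  exact List.append_cancel_left h2

private lemma flatMap_nil_of {Sig V : Type*} {dec : V → List Sig}
    (hdec_ne : ∀ t : V, dec t ≠ []) {r : List V} (h : r.flatMap dec = []) : r = [] := by
  cases r with
  | nil => rfl
  | cons x xs =>
    simp [List.flatMap_cons] at h
    exact absurd h.1 (hdec_ne x)

/-- if `(Sig, V, enc, dec)` is a non-recovering tokenizer and `pre` is a
pretokenizer that is closed under prefix (with the listed structural properties), then the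
tokenizer with encoder `enc_pre` is also non-recovering. -/
theorem pretokenized_non_recovering
    {Sig V : Type*}
    (dec : V → List Sig) (enc : List Sig → List V)
    -- each token decodes to a nonempty string
    (hdec_ne : ∀ t : V, dec t ≠ [])
    -- `enc` is an encoder: `dec (enc σ) = σ` for every nonempty string `σ`
    (hencdec : ∀ σ : List Sig, σ ≠ [] → (enc σ).flatMap dec = σ)
    -- the tokenizer `(Sig, V, enc, dec)` is non-recovering
    (hnr : ∀ s : List V, s ≠ [] → enc (s.flatMap dec) ≠ s →
      ∀ t : V, enc ((s ++ [t]).flatMap dec) ≠ s ++ [t])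
    -- the pretokenizer
    (pre : List Sig → List (List Sig))
    -- (i) the segments of `pre σ` are nonempty and concatenate to `σ`
    (hpre_join : ∀ σ : List Sig, σ ≠ [] → (pre σ).flatten = σ)
    (hpre_ne : ∀ σ : List Sig, σ ≠ [] → ∀ τ ∈ pre σ, τ ≠ [])
    -- (ii) every segment produced by `pre` is itself a fixed point of `pre`
    (hpre_fix : ∀ σ : List Sig, σ ≠ [] → ∀ τ ∈ pre σ, pre τ = [τ])
    -- (iii) `pre` is closed under prefix
    (hpre_prefix : ∀ σ : List Sig, pre σ = [σ] →
      ∀ σ' : List Sig, σ' ≠ [] → σ' <+: σ → pre σ' = [σ'])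
    -- (iv) appending the decoding of a single token either adds a new final segment or
    -- extends the final segment
    (hpre_append : ∀ σ : List Sig, σ ≠ [] → ∀ t : V,
      pre (σ ++ dec t) = pre σ ++ [dec t] ∨
      ∃ (init : List (List Sig)) (last : List Sig),
        pre σ = init ++ [last] ∧ pre (σ ++ dec t) = init ++ [last ++ dec t])
    -- the encoder with pretokenization
    (encPre : List Sig → List V)
    (hencPre : ∀ σ : List Sig, encPre σ = ((pre σ).map enc).flatten)
    -- `s` is a nonempty token sequence that is not pre-canonical
    (s : List V) (hs : s ≠ []) (hnc : encPre (s.flatMap dec) ≠ s)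
    (t : V) :
    encPre ((s ++ [t]).flatMap dec) ≠ s ++ [t] := by

  -- main proof
  have hdecenc : ∀ (L : List (List Sig)), (∀ τ ∈ L, τ ≠ []) →
      ((L.map enc).flatten).flatMap dec = L.flatten := by
    intro L
    induction L with
    | nil => intro _; simp
    | cons x xs ih =>
      intro hL
      simp only [List.map_cons, List.flatten_cons, List.flatMap_append]
      rw [hencdec x (hL x (by simp)), ih (fun τ hτ => hL τ (by simp [hτ]))]
  set σ := s.flatMap dec with hσ
  have hσne : σ ≠ [] := fun h => hs (flatMap_nil_of hdec_ne h)
  have hst : (s ++ [t]).flatMap dec = σ ++ dec t := by simp [hσ]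
  intro heq
  rw [hst, hencPre] at heq
  rcases hpre_append σ hσne t with hP | ⟨init, last, hps, hP⟩
  · -- new final segment
    rw [hP] at heq
    simp only [List.map_append, List.flatten_append, List.map_cons, List.map_nil,
      List.flatten_cons, List.flatten_nil, List.append_nil] at heq
    have hbne : enc (dec t) ≠ [] := by
      intro h
      have := hencdec (dec t) (hdec_ne t)
      rw [h] at this
      exact hdec_ne t this.symm
    obtain ⟨r, hsr, _⟩ := split_tail heq hbne
    have hda : (((pre σ).map enc).flatten).flatMap dec = σ :=
      (hdecenc _ (hpre_ne σ hσne)).trans (hpre_join σ hσne)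
    have h2 : ((List.map enc (pre σ)).flatten ++ r).flatMap dec = s.flatMap dec := by
      rw [← hsr]
    rw [List.flatMap_append, hda, ← hσ] at h2
    have hr : r = [] := flatMap_nil_of hdec_ne
      (List.append_cancel_left (h2.trans (List.append_nil σ).symm))
    rw [hr, List.append_nil] at hsr
    exact hnc (by rw [hencPre]; exact hsr.symm)
  · -- extended final segment
    rw [hP] at heq
    simp only [List.map_append, List.flatten_append, List.map_cons, List.map_nil,
      List.flatten_cons, List.flatten_nil, List.append_nil] at heq
    have hinit_ne : ∀ τ ∈ init, τ ≠ [] := fun τ hτ =>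
      hpre_ne σ hσne τ (by rw [hps]; exact List.mem_append_left _ hτ)
    have hlast_ne : last ≠ [] := hpre_ne σ hσne last (by rw [hps]; simp)
    have hld_ne : last ++ dec t ≠ [] := by simp [hlast_ne]
    have hbne : enc (last ++ dec t) ≠ [] := by
      intro h
      have := hencdec _ hld_ne
      rw [h] at this
      exact hld_ne this.symm
    obtain ⟨s₂, hsr, hb⟩ := split_tail heq hbne
    have hdA : ((init.map enc).flatten).flatMap dec = init.flatten :=
      hdecenc _ hinit_ne
    have hσsplit : σ = init.flatten ++ last := by
      rw [← hpre_join σ hσne, hps]; simp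
    have hds₂ : s₂.flatMap dec = last := by
      have h2 : ((List.map enc init).flatten ++ s₂).flatMap dec = s.flatMap dec := by
        rw [← hsr]
      rw [List.flatMap_append, hdA, ← hσ, hσsplit] at h2
      exact List.append_cancel_left h2
    have hs₂ne : s₂ ≠ [] := by
      intro h; rw [h] at hds₂; exact hlast_ne hds₂.symm
    have henc_last : enc last = s₂ := by
      by_contra hne
      have := hnr s₂ hs₂ne (by rw [hds₂]; exact hne) t
      apply this
      rw [List.flatMap_append, hds₂]
      simp only [List.flatMap_cons, List.flatMap_nil, List.append_nil]
      rw [← hb]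
    apply hnc
    rw [hencPre, hps]
    simp only [List.map_append, List.flatten_append, List.map_cons, List.map_nil,
      List.flatten_cons, List.flatten_nil, List.append_nil]
    rw [henc_last]
    exact hsr.symm
end

section
/- Assume that for every complete sequence s, d(s) = 0 implies p(s) = 0, and that KL(p, d) is finite. Assume further that there exist a token sequence ŝ and tokens t₁, t₂ ∈ V such that: ŝ ++ [t₁] is non-canonical and its prefix probability under d is positive (i.e., d(ŝ) > 0 and d_{ŝ}(t₁) > 0); and ŝ ++ [t₂] is canonical with positive prefix probability under p and positive prefix probability under d. Then KL(p, d̃) < KL(p, d). -/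
open scoped Classical

namespace CanonGen8

variable {V : Type*}

/-- A complete sequence: its last token is `EOS` and it contains no other occurrence
of `EOS`. -/
def Complete (EOS : V) (s : List V) : Prop :=
  ∃ v : List V, s = v ++ [EOS] ∧ EOS ∉ v

/-- The (prefix) probability of a token sequence under the autoregressive generation
process with next-token distributions `dnext`: the product of the conditional
probabilities of its entries given the preceding prefix. -/
noncomputable def seqProb (EOS : V) (dnext : List V → V → ℝ) (u : List V) : ℝ :=
  ∏ k ∈ Finset.range u.length, dnext (u.take k) (u.getD k EOS)

variable [Fintype V]

/-- `Z(u)`: the total next-token probability mass of tokens keeping `u` canonical. -/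
noncomputable def Z (canon : List V → Prop) (dnext : List V → V → ℝ) (u : List V) : ℝ :=
  ∑ t : V, if canon (u ++ [t]) then dnext u t else 0

/-- The canonicalized next-token distribution `d̃_u`. -/
noncomputable def dtildeNext (canon : List V → Prop) (dnext : List V → V → ℝ)
    (u : List V) (t : V) : ℝ :=
  if canon (u ++ [t]) then dnext u t / Z canon dnext u else 0

/-- The prefix probability at `u` of a distribution `p` on complete sequences: the sum of
`p s` over complete sequences `s` extending `u`. -/
noncomputable def prefProb (EOS : V) (p : List V → ℝ) (u : List V) : ℝ :=
  ∑' s : {s : List V // Complete EOS s ∧ u <+: s}, p s.1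

/-- KL divergence between two distributions on complete sequences, with the convention
that terms with `p s = 0` are `0`. -/
noncomputable def KL (EOS : V) (p q : List V → ℝ) : ℝ :=
  ∑' s : {s : List V // Complete EOS s},
    if p s.1 = 0 then 0 else p s.1 * Real.log (p s.1 / q s.1)


lemma canon_take (canon : List V → Prop)
    (hcanon_nr : ∀ s : List V, ¬ canon s → ∀ t : V, ¬ canon (s ++ [t]))
    {s : List V} (hs : canon s) (k : ℕ) : canon (s.take k) := by
  by_contra h
  have key : ∀ n : ℕ, ¬ canon (s.take (k + n)) := by
    intro n
    induction n with
    | zero => simpa using h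
    | succ n ih =>
      rw [show k + (n+1) = (k+n) + 1 from rfl, List.take_succ]
      cases hg : s[k+n]? with
      | none => simpa [hg] using ih
      | some t => simpa [hg] using hcanon_nr _ ih t
  have h2 := key s.length
  rw [List.take_of_length_le (by omega)] at h2
  exact h2 hs

/-- under absolute continuity and finiteness of `KL(p, d)`, if there exist a
sequence `ŝ` and tokens `t₁, t₂` such that `ŝ ++ [t₁]` is non-canonical with positive
prefix probability under `d`, and `ŝ ++ [t₂]` is canonical with positive prefix
probability under both `p` and `d`, then `KL(p, d̃) < KL(p, d)`. -/
theorem KL_canonicalized_lt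
    (EOS : V)
    -- the canonicity predicate: the empty sequence is canonical, and extensions of
    -- non-canonical sequences are non-canonical
    (canon : List V → Prop)
    (hcanon_nil : canon ([] : List V))
    (hcanon_nr : ∀ s : List V, ¬ canon s → ∀ t : V, ¬ canon (s ++ [t]))
    -- the model's next-token distributions
    (dnext : List V → V → ℝ)
    (hdnext_nonneg : ∀ u : List V, ∀ t : V, 0 ≤ dnext u t)
    (hdnext_sum : ∀ u : List V, ∑ t : V, dnext u t = 1)
    -- `d` is a probability distribution on complete sequences
    (hd_prob : HasSum (fun s : {s : List V // Complete EOS s} => seqProb EOS dnext s.1) 1)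
    -- `Z(u) > 0` for every canonical `u`
    (hZ_pos : ∀ u : List V, canon u → 0 < Z canon dnext u)
    -- `d̃` is a probability distribution on complete sequences
    (hdt_prob : HasSum
      (fun s : {s : List V // Complete EOS s} =>
        seqProb EOS (dtildeNext canon dnext) s.1) 1)
    -- `p` is a probability distribution on complete sequences, supported on canonical ones
    (p : List V → ℝ)
    (hp_nonneg : ∀ s : List V, 0 ≤ p s)
    (hp_prob : HasSum (fun s : {s : List V // Complete EOS s} => p s.1) 1)
    (hp_canon : ∀ s : List V, ¬ canon s → p s = 0)
    -- absolute continuity: `d(s) = 0` implies `p(s) = 0` for complete `s`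
    (habs : ∀ s : List V, Complete EOS s → seqProb EOS dnext s = 0 → p s = 0)
    -- `KL(p, d)` is finite
    (hKL_fin : Summable (fun s : {s : List V // Complete EOS s} =>
      if p s.1 = 0 then 0 else p s.1 * Real.log (p s.1 / seqProb EOS dnext s.1)))
    -- the existence assumption on `ŝ`, `t₁`, `t₂`
    (hex : ∃ (shat : List V) (t₁ t₂ : V),
      ¬ canon (shat ++ [t₁]) ∧
        0 < seqProb EOS dnext shat ∧ 0 < dnext shat t₁ ∧
      canon (shat ++ [t₂]) ∧
        0 < prefProb EOS p (shat ++ [t₂]) ∧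
        0 < seqProb EOS dnext (shat ++ [t₂])) :
    KL EOS p (seqProb EOS (dtildeNext canon dnext)) < KL EOS p (seqProb EOS dnext) := by
  classical
  unfold KL
  obtain ⟨shat, t₁, t₂, hnc1, hds, hdt1, hc2, hpp2, hdp2⟩ := hex
  set S := {s : List V // Complete EOS s}
  set d : List V → ℝ := seqProb EOS dnext with hd_def
  set dt : List V → ℝ := seqProb EOS (dtildeNext canon dnext) with hdt_def
  have hZ0 : ∀ u : List V, (0:ℝ) ≤ Z canon dnext u := by
    intro u
    refine Finset.sum_nonneg fun t _ => ?_
    by_cases h : canon (u ++ [t]) <;> simp [h, hdnext_nonneg]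
  have hZ1 : ∀ u : List V, Z canon dnext u ≤ 1 := by
    intro u
    rw [show (1:ℝ) = ∑ t : V, dnext u t from (hdnext_sum u).symm]
    refine Finset.sum_le_sum fun t _ => ?_
    by_cases h : canon (u ++ [t]) <;> simp [h, hdnext_nonneg]
  have hdtn0 : ∀ u t, 0 ≤ dtildeNext canon dnext u t := by
    intro u t
    unfold dtildeNext
    by_cases h : canon (u ++ [t])
    · rw [if_pos h]; exact div_nonneg (hdnext_nonneg u t) (hZ0 u)
    · rw [if_neg h]
  have hd0 : ∀ u : List V, 0 ≤ d u :=
    fun u => Finset.prod_nonneg fun k _ => hdnext_nonneg _ _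
  have hdt0 : ∀ u : List V, 0 ≤ dt u :=
    fun u => Finset.prod_nonneg fun k _ => hdtn0 _ _
  have hform : ∀ s : List V, canon s →
      dt s = d s / ∏ k ∈ Finset.range s.length, Z canon dnext (s.take k) := by
    intro s hs
    rw [hdt_def, hd_def]
    unfold seqProb
    rw [← Finset.prod_div_distrib]
    refine Finset.prod_congr rfl fun k hk => ?_
    have hk' : k < s.length := Finset.mem_range.mp hk
    have htake : s.take (k+1) = s.take k ++ [s.getD k EOS] := by
      rw [List.take_succ, List.getD_eq_getElem s EOS hk', List.getElem?_eq_getElem hk']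
      rfl
    have hc : canon (s.take k ++ [s.getD k EOS]) := by
      rw [← htake]; exact canon_take canon hcanon_nr hs (k+1)
    rw [dtildeNext, if_pos hc]
  have hZP : ∀ s : List V, canon s →
      0 < (∏ k ∈ Finset.range s.length, Z canon dnext (s.take k)) ∧
      (∏ k ∈ Finset.range s.length, Z canon dnext (s.take k)) ≤ 1 := by
    intro s hs
    exact ⟨Finset.prod_pos fun k _ => hZ_pos _ (canon_take canon hcanon_nr hs k),
      Finset.prod_le_one (fun k _ => hZ0 _) (fun k _ => hZ1 _)⟩
  have hkey : ∀ s : List V, canon s → d s ≤ dt s := by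
    intro s hs
    obtain ⟨hZp, hZle⟩ := hZP s hs
    rw [hform s hs, le_div_iff₀ hZp]
    exact mul_le_of_le_one_right (hd0 s) hZle
  set f : S → ℝ := fun s => if p s.1 = 0 then 0 else p s.1 * Real.log (p s.1 / d s.1)
    with hf_def
  set ft : S → ℝ := fun s => if p s.1 = 0 then 0 else p s.1 * Real.log (p s.1 / dt s.1)
    with hft_def
  have hpt : ∀ s : S, p s.1 ≠ 0 →
      0 < p s.1 ∧ 0 < d s.1 ∧ 0 < dt s.1 ∧ d s.1 ≤ dt s.1 ∧ canon s.1 := by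
    intro s hps
    have hcs : canon s.1 := by
      by_contra h; exact hps (hp_canon _ h)
    have hdpos : 0 < d s.1 := by
      rcases lt_or_eq_of_le (hd0 s.1) with h | h
      · exact h
      · exact absurd (habs s.1 s.2 h.symm) hps
    exact ⟨lt_of_le_of_ne (hp_nonneg s.1) (Ne.symm hps), hdpos,
      lt_of_lt_of_le hdpos (hkey s.1 hcs), hkey s.1 hcs, hcs⟩
  have hg_eq : ∀ s : S, p s.1 ≠ 0 →
      f s - ft s = p s.1 * Real.log (dt s.1 / d s.1) := by
    intro s hps
    obtain ⟨hp_, hd_, hdt_, _, _⟩ := hpt s hps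
    rw [hf_def, hft_def]
    simp only [if_neg hps]
    rw [Real.log_div hps (ne_of_gt hd_), Real.log_div hps (ne_of_gt hdt_),
      Real.log_div (ne_of_gt hdt_) (ne_of_gt hd_)]
    ring
  have hg_nonneg : ∀ s : S, 0 ≤ f s - ft s := by
    intro s
    by_cases hps : p s.1 = 0
    · simp [hf_def, hft_def, hps]
    · rw [hg_eq s hps]
      obtain ⟨hp_, hd_, hdt_, hled, _⟩ := hpt s hps
      exact mul_nonneg (le_of_lt hp_) (Real.log_nonneg ((one_le_div hd_).mpr hled))
  have hft_lb : ∀ s : S, p s.1 - dt s.1 ≤ ft s := by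
    intro s
    by_cases hps : p s.1 = 0
    · simp [hft_def, hps, hdt0 s.1]
    · obtain ⟨hp_, hd_, hdt_, _, _⟩ := hpt s hps
      rw [hft_def]
      simp only [if_neg hps]
      have hlog : Real.log (dt s.1 / p s.1) ≤ dt s.1 / p s.1 - 1 :=
        Real.log_le_sub_one_of_pos (div_pos hdt_ hp_)
      have he : Real.log (p s.1 / dt s.1) = -Real.log (dt s.1 / p s.1) := by
        rw [Real.log_div hps (ne_of_gt hdt_), Real.log_div (ne_of_gt hdt_) (ne_of_gt hp_)]
        ring
      rw [he]
      have h2 : p s.1 * Real.log (dt s.1 / p s.1) ≤ p s.1 * (dt s.1 / p s.1 - 1) :=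
        mul_le_mul_of_nonneg_left hlog (le_of_lt hp_)
      have h3 : p s.1 * (dt s.1 / p s.1 - 1) = dt s.1 - p s.1 := by
        field_simp
      nlinarith
  have hft_sum : Summable ft := by
    rw [← summable_abs_iff]
    have hsum2 : Summable (fun s : S => |f s| + |p s.1 - dt s.1|) :=
      (summable_abs_iff.mpr hKL_fin).add
        (summable_abs_iff.mpr (hp_prob.summable.sub hdt_prob.summable))
    refine Summable.of_nonneg_of_le (fun s => abs_nonneg _) (fun s => ?_) hsum2
    rw [abs_le]
    constructor
    · have h1 := hft_lb s
      have h2 : -|p s.1 - dt s.1| ≤ p s.1 - dt s.1 := neg_abs_le _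
      have h3 : 0 ≤ |f s| := abs_nonneg _
      linarith
    · have h1 := hg_nonneg s
      have h2 : f s ≤ |f s| := le_abs_self _
      have h3 : 0 ≤ |p s.1 - dt s.1| := abs_nonneg _
      linarith
  -- witness with positive p mass
  have hw : ∃ s₀ : S, (shat ++ [t₂]) <+: s₀.1 ∧ 0 < p s₀.1 := by
    by_contra hcon
    push_neg at hcon
    have hz : prefProb EOS p (shat ++ [t₂]) = 0 := by
      unfold prefProb
      have hall : ∀ s : {s : List V // Complete EOS s ∧ (shat ++ [t₂]) <+: s},
          p s.1 = 0 := fun s =>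
        le_antisymm (hcon ⟨s.1, s.2.1⟩ s.2.2) (hp_nonneg s.1)
      rw [tsum_congr hall, tsum_zero]
    linarith
  obtain ⟨s₀, hpre, hp₀⟩ := hw
  obtain ⟨hp₀', hd₀, hdt₀, _, hcs₀⟩ := hpt s₀ (ne_of_gt hp₀)
  have hpre' : shat <+: s₀.1 := (shat.prefix_append [t₂]).trans hpre
  have htk : shat = s₀.1.take shat.length := List.prefix_iff_eq_take.mp hpre'
  have hmlt : shat.length < s₀.1.length := by
    have h := hpre.length_le
    simp at h
    omega
  have hZs : Z canon dnext shat < 1 := by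
    have hle : Z canon dnext shat
        ≤ ∑ t : V, (dnext shat t - if t = t₁ then dnext shat t₁ else 0) := by
      apply Finset.sum_le_sum
      intro t _
      by_cases ht : t = t₁
      · subst ht; rw [if_neg hnc1, if_pos rfl]; simp
      · rw [if_neg ht, sub_zero]
        split_ifs with h
        · exact le_refl _
        · exact hdnext_nonneg shat t
    have heq : ∑ t : V, (dnext shat t - if t = t₁ then dnext shat t₁ else 0)
        = 1 - dnext shat t₁ := by
      rw [Finset.sum_sub_distrib, hdnext_sum,
        Finset.sum_ite_eq' Finset.univ t₁ (fun _ => dnext shat t₁)]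
      simp
    rw [heq] at hle
    linarith
  have hZP_lt : ∏ k ∈ Finset.range s₀.1.length, Z canon dnext (s₀.1.take k) < 1 := by
    have hm : shat.length ∈ Finset.range s₀.1.length := Finset.mem_range.mpr hmlt
    rw [← Finset.mul_prod_erase _ _ hm]
    have hZsh : Z canon dnext (s₀.1.take shat.length) < 1 := by rw [← htk]; exact hZs
    calc Z canon dnext (s₀.1.take shat.length) *
          ∏ k ∈ (Finset.range s₀.1.length).erase shat.length,
            Z canon dnext (s₀.1.take k)
        ≤ Z canon dnext (s₀.1.take shat.length) * 1 :=
          mul_le_mul_of_nonneg_left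
            (Finset.prod_le_one (fun k _ => hZ0 _) (fun k _ => hZ1 _)) (hZ0 _)
      _ < 1 := by rw [mul_one]; exact hZsh
  have hdtgt : d s₀.1 < dt s₀.1 := by
    rw [hform s₀.1 hcs₀, lt_div_iff₀ (hZP s₀.1 hcs₀).1]
    exact mul_lt_of_lt_one_right hd₀ hZP_lt
  have hterm : 0 < f s₀ - ft s₀ := by
    rw [hg_eq s₀ (ne_of_gt hp₀)]
    exact mul_pos hp₀ (Real.log_pos ((one_lt_div hd₀).mpr hdtgt))
  have hgsum : Summable (fun s : S => f s - ft s) := hKL_fin.sub hft_sum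
  have htsub : ∑' s : S, (f s - ft s) = (∑' s : S, f s) - ∑' s : S, ft s :=
    Summable.tsum_sub hKL_fin hft_sum
  have hle0 : f s₀ - ft s₀ ≤ ∑' s : S, (f s - ft s) :=
    Summable.le_tsum hgsum s₀ (fun j _ => hg_nonneg j)
  have hfin : (∑' s : S, ft s) < ∑' s : S, f s := by linarith
  exact hfin


end CanonGen8
end

section
/- If s is a complete sequence with d̃(s) > 0, then d(s) > 0 and d̃(s) ≥ d(s). Moreover, if in addition some proper prefix u of s satisfies Z(u) < 1, then d̃(s) > d(s). -/
open scoped Classical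

namespace CanonGen9

variable {V : Type*}

/-- A complete sequence: its last token is `EOS` and it contains no other occurrence
of `EOS`. -/
def Complete (EOS : V) (s : List V) : Prop :=
  ∃ v : List V, s = v ++ [EOS] ∧ EOS ∉ v

/-- The (prefix) probability of a token sequence under the autoregressive generation
process with next-token distributions `dnext`: the product of the conditional
probabilities of its entries given the preceding prefix. -/
noncomputable def seqProb (EOS : V) (dnext : List V → V → ℝ) (u : List V) : ℝ :=
  ∏ k ∈ Finset.range u.length, dnext (u.take k) (u.getD k EOS)

variable [Fintype V]

/-- `Z(u)`: the total next-token probability mass of tokens keeping `u` canonical. -/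
noncomputable def Z (canon : List V → Prop) (dnext : List V → V → ℝ) (u : List V) : ℝ :=
  ∑ t : V, if canon (u ++ [t]) then dnext u t else 0

/-- The canonicalized next-token distribution `d̃_u`. -/
noncomputable def dtildeNext (canon : List V → Prop) (dnext : List V → V → ℝ)
    (u : List V) (t : V) : ℝ :=
  if canon (u ++ [t]) then dnext u t / Z canon dnext u else 0


/-- if `s` is a complete sequence with `d̃(s) > 0`, then `d(s) > 0` and
`d̃(s) ≥ d(s)`; moreover, if some proper prefix `u` of `s` satisfies `Z(u) < 1`, then
`d̃(s) > d(s)`. -/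
theorem dtilde_ge_d
    (EOS : V)
    -- the canonicity predicate: the empty sequence is canonical, and extensions of
    -- non-canonical sequences are non-canonical
    (canon : List V → Prop)
    (hcanon_nil : canon ([] : List V))
    (hcanon_nr : ∀ s : List V, ¬ canon s → ∀ t : V, ¬ canon (s ++ [t]))
    -- the model's next-token distributions
    (dnext : List V → V → ℝ)
    (hdnext_nonneg : ∀ u : List V, ∀ t : V, 0 ≤ dnext u t)
    (hdnext_sum : ∀ u : List V, ∑ t : V, dnext u t = 1)
    -- `d` is a probability distribution on complete sequences
    (hd_prob : HasSum (fun s : {s : List V // Complete EOS s} => seqProb EOS dnext s.1) 1)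
    -- `Z(u) > 0` for every canonical `u`
    (hZ_pos : ∀ u : List V, canon u → 0 < Z canon dnext u)
    -- `d̃` is a probability distribution on complete sequences
    (hdt_prob : HasSum
      (fun s : {s : List V // Complete EOS s} =>
        seqProb EOS (dtildeNext canon dnext) s.1) 1)
    -- `s` is a complete sequence with `d̃(s) > 0`
    (s : List V) (hs : Complete EOS s)
    (hpos : 0 < seqProb EOS (dtildeNext canon dnext) s) :
    0 < seqProb EOS dnext s ∧
    seqProb EOS dnext s ≤ seqProb EOS (dtildeNext canon dnext) s ∧
    (∀ u : List V, u <+: s → u ≠ s → Z canon dnext u < 1 →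
      seqProb EOS dnext s < seqProb EOS (dtildeNext canon dnext) s) := by

  classical
  -- Z(u) ≤ 1 always
  have hZle1 : ∀ u : List V, Z canon dnext u ≤ 1 := by
    intro u
    rw [← hdnext_sum u]
    refine Finset.sum_le_sum ?_
    intro t _
    by_cases h : canon (u ++ [t]) <;> simp [Z, h, hdnext_nonneg u t]
  -- each dtilde factor is nonneg
  have hdt_nonneg : ∀ u : List V, ∀ t : V,
      0 ≤ dtildeNext canon dnext u t := by
    intro u t
    unfold dtildeNext
    split
    · rename_i hc
      have hcu : canon u := by
        by_contra hu
        exact hcanon_nr u hu t hc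
      exact div_nonneg (hdnext_nonneg u t) (hZ_pos u hcu).le
    · exact le_refl 0
  -- each dtilde factor of s is positive
  have hfac : ∀ k ∈ Finset.range s.length,
      0 < dtildeNext canon dnext (s.take k) (s.getD k EOS) := by
    intro k hk
    by_contra h
    have h0 : dtildeNext canon dnext (s.take k) (s.getD k EOS) = 0 :=
      le_antisymm (not_lt.mp h) (hdt_nonneg _ _)
    have : seqProb EOS (dtildeNext canon dnext) s = 0 :=
      Finset.prod_eq_zero hk h0
    rw [this] at hpos
    exact lt_irrefl 0 hpos
  -- consequences per factor
  have key : ∀ k ∈ Finset.range s.length,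
      canon (s.take k ++ [s.getD k EOS]) ∧ canon (s.take k) ∧
      0 < dnext (s.take k) (s.getD k EOS) := by
    intro k hk
    have hp := hfac k hk
    unfold dtildeNext at hp
    by_cases hc : canon (s.take k ++ [s.getD k EOS])
    · have hcu : canon (s.take k) := by
        by_contra hu
        exact hcanon_nr _ hu _ hc
      have hZ := hZ_pos _ hcu
      rw [if_pos hc] at hp
      refine ⟨hc, hcu, ?_⟩
      have := mul_pos hp hZ
      rwa [div_mul_cancel₀ _ (ne_of_gt hZ)] at this
    · rw [if_neg hc] at hp
      exact absurd hp (lt_irrefl 0)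
  have hdpos : ∀ k ∈ Finset.range s.length,
      0 < dnext (s.take k) (s.getD k EOS) := fun k hk => (key k hk).2.2
  -- factorwise inequality
  have hle : ∀ k ∈ Finset.range s.length,
      dnext (s.take k) (s.getD k EOS)
        ≤ dtildeNext canon dnext (s.take k) (s.getD k EOS) := by
    intro k hk
    obtain ⟨hc, hcu, hd⟩ := key k hk
    have hZ := hZ_pos _ hcu
    rw [dtildeNext, if_pos hc, le_div_iff₀ hZ]
    calc dnext (s.take k) (s.getD k EOS) * Z canon dnext (s.take k)
        ≤ dnext (s.take k) (s.getD k EOS) * 1 :=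
          mul_le_mul_of_nonneg_left (hZle1 _) hd.le
      _ = dnext (s.take k) (s.getD k EOS) := mul_one _
  have hdprodpos : 0 < seqProb EOS dnext s := Finset.prod_pos hdpos
  refine ⟨hdprodpos, Finset.prod_le_prod (fun k hk => (hdpos k hk).le) hle, ?_⟩
  intro u hu hne hZu
  have hk : u.length < s.length := by
    rcases lt_or_eq_of_le hu.length_le with h | h
    · exact h
    · exact absurd (List.IsPrefix.eq_of_length hu h) hne
  have hut : u = s.take u.length := List.prefix_iff_eq_take.mp hu
  refine Finset.prod_lt_prod hdpos hle ⟨u.length, Finset.mem_range.mpr hk, ?_⟩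
  obtain ⟨hc, hcu, hd⟩ := key u.length (Finset.mem_range.mpr hk)
  have hZ := hZ_pos _ hcu
  have hZu' : Z canon dnext (s.take u.length) < 1 := by rwa [← hut]
  rw [dtildeNext, if_pos hc, lt_div_iff₀ hZ]
  calc dnext (s.take u.length) (s.getD u.length EOS) * Z canon dnext (s.take u.length)
      < dnext (s.take u.length) (s.getD u.length EOS) * 1 :=
        mul_lt_mul_of_pos_left hZu' hd
    _ = dnext (s.take u.length) (s.getD u.length EOS) := mul_one _


end CanonGen9
end

section
/- Assume that for every complete sequence s, d(s) = 0 implies p(s) = 0, and that KL(p, d) is finite. Then: (a) every complete sequence s with d̃(s) = 0 satisfies p(s) = 0; and (b) KL(p, d) − KL(p, d̃) = Σ_{s complete, d̃(s) > 0} p(s) · log(d̃(s)/d(s)), where every summand is nonnegative. -/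
open scoped Classical

namespace CanonGen10

variable {V : Type*}

/-- A complete sequence: its last token is `EOS` and it contains no other occurrence
of `EOS`. -/
def Complete (EOS : V) (s : List V) : Prop :=
  ∃ v : List V, s = v ++ [EOS] ∧ EOS ∉ v

/-- The (prefix) probability of a token sequence under the autoregressive generation
process with next-token distributions `dnext`: the product of the conditional
probabilities of its entries given the preceding prefix. -/
noncomputable def seqProb (EOS : V) (dnext : List V → V → ℝ) (u : List V) : ℝ :=
  ∏ k ∈ Finset.range u.length, dnext (u.take k) (u.getD k EOS)

variable [Fintype V]

/-- `Z(u)`: the total next-token probability mass of tokens keeping `u` canonical. -/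
noncomputable def Z (canon : List V → Prop) (dnext : List V → V → ℝ) (u : List V) : ℝ :=
  ∑ t : V, if canon (u ++ [t]) then dnext u t else 0

/-- The canonicalized next-token distribution `d̃_u`. -/
noncomputable def dtildeNext (canon : List V → Prop) (dnext : List V → V → ℝ)
    (u : List V) (t : V) : ℝ :=
  if canon (u ++ [t]) then dnext u t / Z canon dnext u else 0

/-- The prefix probability at `u` of a distribution `p` on complete sequences: the sum of
`p s` over complete sequences `s` extending `u`. -/
noncomputable def prefProb (EOS : V) (p : List V → ℝ) (u : List V) : ℝ :=
  ∑' s : {s : List V // Complete EOS s ∧ u <+: s}, p s.1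

/-- KL divergence between two distributions on complete sequences, with the convention
that terms with `p s = 0` are `0`. -/
noncomputable def KL (EOS : V) (p q : List V → ℝ) : ℝ :=
  ∑' s : {s : List V // Complete EOS s},
    if p s.1 = 0 then 0 else p s.1 * Real.log (p s.1 / q s.1)

lemma not_canon_append (canon : List V → Prop)
    (hnr : ∀ s : List V, ¬ canon s → ∀ t : V, ¬ canon (s ++ [t])) :
    ∀ (w u : List V), ¬ canon u → ¬ canon (u ++ w) := by
  intro w
  induction w using List.reverseRecOn with
  | nil => intro u hu; simpa using hu
  | append_singleton w t ih =>
      intro u hu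
      rw [← List.append_assoc]
      exact hnr _ (ih u hu) t

lemma canon_take (canon : List V → Prop)
    (hnr : ∀ s : List V, ¬ canon s → ∀ t : V, ¬ canon (s ++ [t]))
    (u : List V) (hu : canon u) (k : ℕ) : canon (u.take k) := by
  by_contra h
  exact not_canon_append canon hnr (u.drop k) (u.take k) h
    (by rwa [List.take_append_drop])

lemma seqProb_nonneg (EOS : V) (dn : List V → V → ℝ)
    (h : ∀ u t, 0 ≤ dn u t) (u : List V) : 0 ≤ seqProb EOS dn u :=
  Finset.prod_nonneg fun _ _ => h _ _

lemma Z_le_one (canon : List V → Prop) (dn : List V → V → ℝ)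
    (hnn : ∀ u t, 0 ≤ dn u t) (hsum : ∀ u : List V, ∑ t : V, dn u t = 1)
    (u : List V) : Z canon dn u ≤ 1 := by
  rw [← hsum u]
  unfold Z
  refine Finset.sum_le_sum fun t _ => ?_
  split
  · exact le_refl _
  · exact hnn u t

lemma dtildeNext_nonneg (canon : List V → Prop)
    (hnr : ∀ s : List V, ¬ canon s → ∀ t : V, ¬ canon (s ++ [t]))
    (dn : List V → V → ℝ) (hnn : ∀ u t, 0 ≤ dn u t)
    (hZ : ∀ u : List V, canon u → 0 < Z canon dn u)
    (u : List V) (t : V) : 0 ≤ dtildeNext canon dn u t := by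
  unfold dtildeNext
  split
  · rename_i h
    have hu : canon u := by
      by_contra hc; exact hnr u hc t h
    exact div_nonneg (hnn u t) (hZ u hu).le
  · exact le_refl _

lemma seqProb_dtilde_eq (EOS : V) (canon : List V → Prop)
    (hnr : ∀ s : List V, ¬ canon s → ∀ t : V, ¬ canon (s ++ [t]))
    (dn : List V → V → ℝ)
    (u : List V) (hu : canon u) :
    seqProb EOS (dtildeNext canon dn) u
      = seqProb EOS dn u / ∏ k ∈ Finset.range u.length, Z canon dn (u.take k) := by
  unfold seqProb
  rw [← Finset.prod_div_distrib]
  refine Finset.prod_congr rfl fun k hk => ?_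
  have hk' : k < u.length := Finset.mem_range.mp hk
  have hconc : u.take k ++ [u.getD k EOS] = u.take (k+1) := by
    rw [List.getD_eq_getElem u EOS hk', List.take_succ, List.getElem?_eq_getElem hk']
    rfl
  have hc : canon (u.take k ++ [u.getD k EOS]) := by
    rw [hconc]; exact canon_take canon hnr u hu (k+1)
  show dtildeNext canon dn (u.take k) (u.getD k EOS) = _
  unfold dtildeNext
  rw [if_pos hc]

/-- under absolute continuity and finiteness of `KL(p, d)`: (a) `d̃(s) = 0`
implies `p(s) = 0` for complete `s`; and (b)
`KL(p, d) − KL(p, d̃) = Σ_{s complete, d̃(s) > 0} p(s) · log(d̃(s)/d(s))`,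
where every summand is nonnegative. -/
theorem KL_difference_formula
    (EOS : V)
    -- the canonicity predicate: the empty sequence is canonical, and extensions of
    -- non-canonical sequences are non-canonical
    (canon : List V → Prop)
    (hcanon_nil : canon ([] : List V))
    (hcanon_nr : ∀ s : List V, ¬ canon s → ∀ t : V, ¬ canon (s ++ [t]))
    -- the model's next-token distributions
    (dnext : List V → V → ℝ)
    (hdnext_nonneg : ∀ u : List V, ∀ t : V, 0 ≤ dnext u t)
    (hdnext_sum : ∀ u : List V, ∑ t : V, dnext u t = 1)
    -- `d` is a probability distribution on complete sequences
    (hd_prob : HasSum (fun s : {s : List V // Complete EOS s} => seqProb EOS dnext s.1) 1)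
    -- `Z(u) > 0` for every canonical `u`
    (hZ_pos : ∀ u : List V, canon u → 0 < Z canon dnext u)
    -- `d̃` is a probability distribution on complete sequences
    (hdt_prob : HasSum
      (fun s : {s : List V // Complete EOS s} =>
        seqProb EOS (dtildeNext canon dnext) s.1) 1)
    -- `p` is a probability distribution on complete sequences, supported on canonical ones
    (p : List V → ℝ)
    (hp_nonneg : ∀ s : List V, 0 ≤ p s)
    (hp_prob : HasSum (fun s : {s : List V // Complete EOS s} => p s.1) 1)
    (hp_canon : ∀ s : List V, ¬ canon s → p s = 0)
    -- absolute continuity: `d(s) = 0` implies `p(s) = 0` for complete `s`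
    (habs : ∀ s : List V, Complete EOS s → seqProb EOS dnext s = 0 → p s = 0)
    -- `KL(p, d)` is finite
    (hKL_fin : Summable (fun s : {s : List V // Complete EOS s} =>
      if p s.1 = 0 then 0 else p s.1 * Real.log (p s.1 / seqProb EOS dnext s.1))) :
    -- (a)
    (∀ s : List V, Complete EOS s →
      seqProb EOS (dtildeNext canon dnext) s = 0 → p s = 0) ∧
    -- (b): the value of the difference, ...
    KL EOS p (seqProb EOS dnext) - KL EOS p (seqProb EOS (dtildeNext canon dnext)) =
      (∑' s : {s : List V // Complete EOS s ∧ 0 < seqProb EOS (dtildeNext canon dnext) s},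
        p s.1 * Real.log
          (seqProb EOS (dtildeNext canon dnext) s.1 / seqProb EOS dnext s.1)) ∧
    -- ... every summand of which is nonnegative
    (∀ s : List V, Complete EOS s → 0 < seqProb EOS (dtildeNext canon dnext) s →
      0 ≤ p s * Real.log (seqProb EOS (dtildeNext canon dnext) s / seqProb EOS dnext s)) := by
  classical
  set D := seqProb EOS dnext with hDdef
  set Dt := seqProb EOS (dtildeNext canon dnext) with hDtdef
  have hDnn : ∀ s : List V, 0 ≤ D s := seqProb_nonneg EOS dnext hdnext_nonneg
  have hDtnn : ∀ s : List V, 0 ≤ Dt s :=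
    seqProb_nonneg EOS (dtildeNext canon dnext)
      (dtildeNext_nonneg canon hcanon_nr dnext hdnext_nonneg hZ_pos)
  -- product of Z's over prefixes: positive and at most 1
  have hPpos : ∀ u : List V, canon u →
      0 < ∏ k ∈ Finset.range u.length, Z canon dnext (u.take k) := fun u hu =>
    Finset.prod_pos fun k _ => hZ_pos _ (canon_take canon hcanon_nr u hu k)
  have hPle : ∀ u : List V,
      (∏ k ∈ Finset.range u.length, Z canon dnext (u.take k)) ≤ 1 := fun u =>
    Finset.prod_le_one (fun k _ => (by
      by_cases hc : canon (u.take k)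
      · exact (hZ_pos _ hc).le
      · have : Z canon dnext (u.take k) = 0 := by
          unfold Z
          refine Finset.sum_eq_zero fun t _ => ?_
          rw [if_neg (hcanon_nr _ hc t)]
        rw [this]))
      (fun k _ => Z_le_one canon dnext hdnext_nonneg hdnext_sum _)
  have hle : ∀ s : List V, canon s → D s ≤ Dt s := by
    intro s hs
    rw [hDtdef, seqProb_dtilde_eq EOS canon hcanon_nr dnext s hs]
    rw [le_div_iff₀ (hPpos s hs)]
    exact mul_le_of_le_one_right (hDnn s) (hPle s)
  -- part (a)
  have parta : ∀ s : List V, Complete EOS s → Dt s = 0 → p s = 0 := by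
    intro s hs hz
    by_cases hc : canon s
    · rw [hDtdef, seqProb_dtilde_eq EOS canon hcanon_nr dnext s hc] at hz
      rcases div_eq_zero_iff.mp hz with h0 | h0
      · exact habs s hs h0
      · exact absurd h0 (hPpos s hc).ne'
    · exact hp_canon s hc
  -- positivity facts when p s ≠ 0
  have hpos : ∀ s : List V, Complete EOS s → p s ≠ 0 →
      0 < D s ∧ 0 < Dt s := by
    intro s hs hp
    have hc : canon s := by by_contra hc; exact hp (hp_canon s hc)
    have hD : 0 < D s :=
      lt_of_le_of_ne (hDnn s) (fun h => hp (habs s hs h.symm))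
    exact ⟨hD, lt_of_lt_of_le hD (hle s hc)⟩
  -- part (c)
  have partc : ∀ s : List V, Complete EOS s → 0 < Dt s →
      0 ≤ p s * Real.log (Dt s / D s) := by
    intro s hs _
    by_cases hp : p s = 0
    · simp [hp]
    · obtain ⟨hD, hDt⟩ := hpos s hs hp
      have hc : canon s := by by_contra hc; exact hp (hp_canon s hc)
      exact mul_nonneg (hp_nonneg s)
        (Real.log_nonneg ((one_le_div hD).mpr (hle s hc)))
  refine ⟨parta, ?_, partc⟩
  -- part (b)
  set S := {s : List V // Complete EOS s}
  set f : S → ℝ := fun s => if p s.1 = 0 then 0 else p s.1 * Real.log (p s.1 / D s.1)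
    with hfdef
  set g : S → ℝ := fun s => if p s.1 = 0 then 0 else p s.1 * Real.log (p s.1 / Dt s.1)
    with hgdef
  set h : S → ℝ := fun s => if p s.1 = 0 then 0 else p s.1 * Real.log (Dt s.1 / D s.1)
    with hhdef
  have hfg : ∀ s : S, f s - g s = h s := by
    intro s
    by_cases hp : p s.1 = 0
    · simp [hfdef, hgdef, hhdef, hp]
    · obtain ⟨hD, hDt⟩ := hpos s.1 s.2 hp
      simp only [hfdef, hgdef, hhdef, if_neg hp]
      rw [Real.log_div hp hD.ne', Real.log_div hp hDt.ne',
        Real.log_div hDt.ne' hD.ne']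
      ring
  have hhnn : ∀ s : S, 0 ≤ h s := by
    intro s
    simp only [hhdef]
    split
    · exact le_refl _
    · rename_i hp
      obtain ⟨hD, hDt⟩ := hpos s.1 s.2 hp
      have hc : canon s.1 := by by_contra hc; exact hp (hp_canon s.1 hc)
      exact mul_nonneg (hp_nonneg s.1)
        (Real.log_nonneg ((one_le_div hD).mpr (hle s.1 hc)))
  have hglb : ∀ s : S, p s.1 - Dt s.1 ≤ g s := by
    intro s
    by_cases hp : p s.1 = 0
    · simp only [hgdef, if_pos hp, hp]
      linarith [hDtnn s.1]
    · obtain ⟨hD, hDt⟩ := hpos s.1 s.2 hp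
      have hpp : 0 < p s.1 := lt_of_le_of_ne (hp_nonneg s.1) (Ne.symm hp)
      simp only [hgdef, if_neg hp]
      have h1 : Real.log (Dt s.1 / p s.1) ≤ Dt s.1 / p s.1 - 1 :=
        Real.log_le_sub_one_of_pos (div_pos hDt hpp)
      have h2 : Real.log (p s.1 / Dt s.1) = - Real.log (Dt s.1 / p s.1) := by
        rw [← Real.log_inv, inv_div]
      have h3 : 1 - Dt s.1 / p s.1 ≤ Real.log (p s.1 / Dt s.1) := by
        rw [h2]; linarith
      have h4 : p s.1 * (1 - Dt s.1 / p s.1) ≤ p s.1 * Real.log (p s.1 / Dt s.1) :=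
        mul_le_mul_of_nonneg_left h3 hpp.le
      have h5 : p s.1 * (1 - Dt s.1 / p s.1) = p s.1 - Dt s.1 := by
        field_simp
      linarith
  have hhle : ∀ s : S, h s ≤ |f s| + Dt s.1 := by
    intro s
    have := hfg s
    have := hglb s
    have := le_abs_self (f s)
    have := hp_nonneg s.1
    linarith
  have hhsum : Summable h :=
    Summable.of_nonneg_of_le hhnn hhle (hKL_fin.abs.add hdt_prob.summable)
  have hfsum : Summable f := hKL_fin
  have hgsum : Summable g :=
    (hfsum.sub hhsum).congr fun s => by have := hfg s; change f s - h s = g s; linarith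
  have hKLd : KL EOS p D = ∑' s : S, f s := rfl
  have hKLdt : KL EOS p Dt = ∑' s : S, g s := rfl
  have hdiff : KL EOS p D - KL EOS p Dt = ∑' s : S, h s := by
    rw [hKLd, hKLdt, ← Summable.tsum_sub hfsum hgsum]
    exact tsum_congr hfg
  rw [hdiff]
  -- convert the sum over complete sequences to the sum over the support of Dt
  have hA : (∑' s : S, h s)
      = ∑' x : List V, Set.indicator {s : List V | Complete EOS s}
          (fun s => if p s = 0 then 0 else p s * Real.log (Dt s / D s)) x :=
    tsum_subtype {s : List V | Complete EOS s}
      (fun s => if p s = 0 then 0 else p s * Real.log (Dt s / D s))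
  have hB : (∑' s : {s : List V // Complete EOS s ∧ 0 < Dt s},
        p s.1 * Real.log (Dt s.1 / D s.1))
      = ∑' x : List V, Set.indicator {s : List V | Complete EOS s ∧ 0 < Dt s}
          (fun s => p s * Real.log (Dt s / D s)) x :=
    tsum_subtype {s : List V | Complete EOS s ∧ 0 < Dt s}
      (fun s => p s * Real.log (Dt s / D s))
  rw [hA, hB]
  refine tsum_congr fun x => ?_
  by_cases hx : Complete EOS x
  · by_cases hdt : 0 < Dt x
    · rw [Set.indicator_of_mem (by exact hx), Set.indicator_of_mem (by exact ⟨hx, hdt⟩)]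
      by_cases hp : p x = 0
      · simp [hp]
      · rw [if_neg hp]
    · have hz : Dt x = 0 := le_antisymm (not_lt.mp hdt) (hDtnn x)
      have hp : p x = 0 := parta x hx hz
      rw [Set.indicator_of_mem (by exact hx),
        Set.indicator_of_notMem (by exact fun hm => hdt hm.2), if_pos hp]
  · rw [Set.indicator_of_notMem (by exact hx),
      Set.indicator_of_notMem (by exact fun hm => hx hm.1)]


end CanonGen10
end

section
/- Let V be a nonempty finite type, let w : V → (0, ∞) be a weight function, and let C ⊆ V be a nonempty subset. Let (U_t)_{t ∈ V} be independent real-valued random variables each distributed according to the standard Gumbel distribution. Then, almost surely, the maximizer over t ∈ C of log(w(t)) + U_t is unique, and for every t₀ ∈ C, the probability that t₀ is this maximizer equals w(t₀) / Σ_{t ∈ C} w(t). -/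
open MeasureTheory ProbabilityTheory

/-!
Conditionally on `U t₀ = x`, independence and the Gumbel CDF make the probability that every other
`t ∈ C` loses equal to `∏ exp (-(w t / w t₀) e^{-x}) = exp (-q e^{-x})`, where
`q = ∑_{t ≠ t₀} w t / w t₀`. Integrating against the Gumbel density `e^{-x} exp (-e^{-x})`
(substitute `y = -e^{-x}`) gives `1 / (1 + q) = w t₀ / ∑ w`. These probabilities add up to `1`
while the events cover the sample space, so two of them can only overlap in a null set: the
maximizer is almost surely unique.
-/

open Real Set

lemma image_neg_exp_neg_Iic (a : ℝ) : (fun x => -exp (-x)) '' Iic a = Iic (-exp (-a)) := by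
  ext y
  constructor
  · rintro ⟨x, hx, rfl⟩
    simpa using exp_le_exp.2 (neg_le_neg (mem_Iic.1 hx))
  · intro hy
    have hy0 : 0 < -y := lt_of_lt_of_le (exp_pos _) (le_neg.1 hy)
    refine ⟨-log (-y), ?_, by simp only [neg_neg, exp_log hy0]⟩
    rw [mem_Iic, neg_le, ← exp_le_exp, exp_log hy0]
    exact le_neg.1 hy

lemma range_neg_exp_neg : range (fun x => -exp (-x)) = Iio 0 := by
  ext y
  constructor
  · rintro ⟨x, rfl⟩
    simpa using exp_pos (-x)
  · intro hy
    have hy0 : 0 < -y := neg_pos.2 hy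
    exact ⟨-log (-y), by simp only [neg_neg, exp_log hy0]⟩

lemma lintegral_Iic_ofReal_exp_mul {r : ℝ} (hr : 0 < r) (b : ℝ) :
    ∫⁻ y in Iic b, ENNReal.ofReal (exp (r * y)) = ENNReal.ofReal (exp (r * b) / r) := by
  rw [← ofReal_integral_eq_lintegral_ofReal (integrableOn_exp_mul_Iic hr b)
    (Filter.Eventually.of_forall fun _ => (exp_pos _).le), integral_exp_mul_Iic hr]

lemma setLIntegral_comp_neg_exp_neg {s : Set ℝ} (hs : MeasurableSet s) (u : ℝ → ENNReal) :
    ∫⁻ x in s, ENNReal.ofReal (exp (-x)) * u (-exp (-x)) =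
      ∫⁻ y in (fun x => -exp (-x)) '' s, u y := by
  refine (lintegral_image_eq_lintegral_deriv_mul_of_monotoneOn hs (fun x _ => ?_) ?_ u).symm
  · exact ((hasDerivAt_neg x).exp.neg.congr_deriv (by ring)).hasDerivWithinAt
  · intro x _ y _ hxy
    simpa using exp_le_exp.2 (neg_le_neg hxy)

lemma setLIntegral_Iic_exp_neg_mul_exp_neg_mul_exp_neg {r : ℝ} (hr : 0 < r) (a : ℝ) :
    ∫⁻ x in Iic a, ENNReal.ofReal (exp (-x)) * ENNReal.ofReal (exp (-(r * exp (-x)))) =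
      ENNReal.ofReal (exp (-(r * exp (-a))) / r) := by
  simpa [mul_neg, image_neg_exp_neg_Iic, lintegral_Iic_ofReal_exp_mul hr] using
    setLIntegral_comp_neg_exp_neg (s := Iic a) measurableSet_Iic
      (fun y => ENNReal.ofReal (exp (r * y)))

lemma lintegral_exp_neg_mul_exp_neg_mul_exp_neg {r : ℝ} (hr : 0 < r) :
    ∫⁻ x, ENNReal.ofReal (exp (-x)) * ENNReal.ofReal (exp (-(r * exp (-x)))) =
      ENNReal.ofReal (1 / r) := by
  have := setLIntegral_comp_neg_exp_neg MeasurableSet.univ (fun y => ENNReal.ofReal (exp (r * y)))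
  rw [setLIntegral_univ, image_univ, range_neg_exp_neg, setLIntegral_congr Iio_ae_eq_Iic,
    lintegral_Iic_ofReal_exp_mul hr] at this
  simpa [mul_neg] using this

lemma exp_neg_exp_neg_log_sub_log_add {a b : ℝ} (ha : 0 < a) (hb : 0 < b) (x : ℝ) :
    exp (-exp (-(log a - log b + x))) = exp (-(b / a * exp (-x))) := by
  rw [neg_add, exp_add, neg_sub, exp_sub, exp_log ha, exp_log hb]

namespace MeasureTheory

variable {ι Ω : Type*} [MeasurableSpace Ω] {μ : Measure Ω} [IsFiniteMeasure μ] {s : Finset ι}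
  {A : ι → Set Ω}

lemma measure_inter_eq_zero_of_sum_measure_eq (hA : ∀ i ∈ s, MeasurableSet (A i))
    (hcover : ∀ ω, ∃ i ∈ s, ω ∈ A i) (hsum : ∑ i ∈ s, μ (A i) = μ univ) {i j : ι} (hi : i ∈ s)
    (hj : j ∈ s) (hij : i ≠ j) : μ (A i ∩ A j) = 0 := by
  classical
  set r := (s.erase i).erase j
  have hsplit : ∑ k ∈ s, μ (A k) = μ (A i) + μ (A j) + ∑ k ∈ r, μ (A k) := by
    rw [← Finset.add_sum_erase s _ hi,
      ← Finset.add_sum_erase (s.erase i) _ (Finset.mem_erase.2 ⟨hij.symm, hj⟩), add_assoc]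
  have hcover' : univ ⊆ (A i ∪ A j) ∪ ⋃ k ∈ r, A k := by
    intro ω _
    obtain ⟨k, hk, hωk⟩ := hcover ω
    by_cases hki : k = i
    · exact Or.inl (Or.inl (hki ▸ hωk))
    by_cases hkj : k = j
    · exact Or.inl (Or.inr (hkj ▸ hωk))
    exact Or.inr (mem_iUnion₂.2 ⟨k, Finset.mem_erase.2 ⟨hkj, Finset.mem_erase.2 ⟨hki, hk⟩⟩, hωk⟩)
  have hle : μ univ + μ (A i ∩ A j) ≤ μ univ + 0 :=
    calc μ univ + μ (A i ∩ A j)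
        ≤ μ (A i ∪ A j) + ∑ k ∈ r, μ (A k) + μ (A i ∩ A j) := by
          gcongr
          exact (measure_mono hcover').trans
            ((measure_union_le _ _).trans (by gcongr; exact measure_biUnion_finset_le _ _))
      _ = μ univ + 0 := by
          rw [add_right_comm, measure_union_add_inter _ (hA j hj), ← hsplit, hsum, add_zero]
  exact le_zero_iff.1 ((ENNReal.add_le_add_iff_left (measure_ne_top μ univ)).1 hle)

lemma ae_existsUnique_mem_of_sum_measure_eq (hA : ∀ i ∈ s, MeasurableSet (A i))
    (hcover : ∀ ω, ∃ i ∈ s, ω ∈ A i) (hsum : ∑ i ∈ s, μ (A i) = μ univ) :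
    ∀ᵐ ω ∂μ, ∃! i, i ∈ s ∧ ω ∈ A i := by
  have hdisj : ∀ᵐ ω ∂μ, ∀ i ∈ s, ∀ j ∈ s, i ≠ j → ω ∉ A i ∩ A j := by
    simp only [Filter.eventually_all_finset, Filter.eventually_imp_distrib_left]
    exact fun i hi j hj hij => measure_eq_zero_iff_ae_notMem.1
      (measure_inter_eq_zero_of_sum_measure_eq hA hcover hsum hi hj hij)
  filter_upwards [hdisj] with ω hω
  obtain ⟨i, hi, hωi⟩ := hcover ω
  exact ⟨i, ⟨hi, hωi⟩, fun j ⟨hj, hωj⟩ => by_contra fun hji => hω j hj i hi hji ⟨hωj, hωi⟩⟩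

end MeasureTheory

namespace ProbabilityTheory

noncomputable def gumbelMeasure : Measure ℝ :=
  volume.withDensity fun x => ENNReal.ofReal (exp (-x)) * ENNReal.ofReal (exp (-exp (-x)))

lemma gumbelMeasure_Iic (a : ℝ) : gumbelMeasure (Iic a) = ENNReal.ofReal (exp (-exp (-a))) := by
  rw [gumbelMeasure, withDensity_apply _ measurableSet_Iic]
  simpa using setLIntegral_Iic_exp_neg_mul_exp_neg_mul_exp_neg one_pos a

lemma lintegral_exp_neg_mul_exp_neg_gumbelMeasure {q : ℝ} (hq : -1 < q) :
    ∫⁻ x, ENNReal.ofReal (exp (-(q * exp (-x)))) ∂gumbelMeasure = ENNReal.ofReal (1 / (1 + q)) := by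
  rw [gumbelMeasure, lintegral_withDensity_eq_lintegral_mul _ (by fun_prop) (by fun_prop),
    ← lintegral_exp_neg_mul_exp_neg_mul_exp_neg (by linarith : 0 < 1 + q)]
  refine lintegral_congr fun x => ?_
  simp only [Pi.mul_apply]
  rw [mul_assoc, ← ENNReal.ofReal_mul (exp_pos _).le, ← exp_add]
  ring_nf

variable {Ω : Type*} [MeasurableSpace Ω] {μ : Measure Ω} [IsFiniteMeasure μ]

lemma map_eq_gumbelMeasure {X : Ω → ℝ} (hX : Measurable X)
    (hX_cdf : ∀ x, μ {ω | X ω ≤ x} = ENNReal.ofReal (exp (-exp (-x)))) :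
    μ.map X = gumbelMeasure :=
  Measure.ext_of_Iic _ _ fun a => by
    rw [Measure.map_apply hX measurableSet_Iic, gumbelMeasure_Iic]
    exact hX_cdf a

lemma IndepFun.measure_preimage_eq_lintegral {α β : Type*} [MeasurableSpace α] [MeasurableSpace β]
    {X : Ω → α} {Y : Ω → β} (hXY : IndepFun X Y μ) (hX : Measurable X) (hY : Measurable Y)
    {T : Set (α × β)} (hT : MeasurableSet T) :
    μ ((fun ω => (X ω, Y ω)) ⁻¹' T) = ∫⁻ x, μ.map Y (Prod.mk x ⁻¹' T) ∂μ.map X := by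
  rw [← Measure.map_apply (hX.prodMk hY) hT,
    (indepFun_iff_map_prod_eq_prod_map_map hX.aemeasurable hY.aemeasurable).1 hXY,
    Measure.prod_apply hT]

lemma iIndepFun.measure_forall_le_add_eq_lintegral {ι : Type*} {U : ι → Ω → ℝ}
    (hU : iIndepFun U μ) (hU_meas : ∀ i, Measurable (U i)) {s : Finset ι} {i₀ : ι} (hi₀ : i₀ ∉ s)
    (c : ι → ℝ) :
    μ {ω | ∀ i ∈ s, U i ω ≤ c i + U i₀ ω} =
      ∫⁻ x, ∏ i ∈ s, μ {ω | U i ω ≤ c i + x} ∂μ.map (U i₀) := by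
  set W : Ω → (s → ℝ) := fun ω i => U i ω
  have hW : Measurable W := measurable_pi_lambda _ fun i => hU_meas i
  have hindep : IndepFun (U i₀) W μ :=
    (hU.indepFun_finset {i₀} s (Finset.disjoint_singleton_left.2 hi₀) hU_meas).comp
      (measurable_pi_apply (⟨i₀, Finset.mem_singleton_self i₀⟩ : ({i₀} : Finset ι))) measurable_id
  set T : Set (ℝ × (s → ℝ)) := {p | ∀ i : s, p.2 i ≤ c i + p.1}
  have hT : MeasurableSet T := by
    simp only [T, ofPred_forall]
    exact MeasurableSet.iInter fun i => measurableSet_le (by fun_prop) (by fun_prop)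
  have hslice : ∀ x, μ.map W (Prod.mk x ⁻¹' T) = ∏ i ∈ s, μ {ω | U i ω ≤ c i + x} := by
    intro x
    rw [Measure.map_apply hW (measurable_prodMk_left hT)]
    convert hU.measure_inter_preimage_eq_mul s (sets := fun i => Iic (c i + x))
      (fun _ _ => measurableSet_Iic) using 2
    · ext ω
      simp [W, T]
    · rfl
  have hevent : {ω | ∀ i ∈ s, U i ω ≤ c i + U i₀ ω} = (fun ω => (U i₀ ω, W ω)) ⁻¹' T := by
    ext ω
    simp [W, T]
  rw [hevent, hindep.measure_preimage_eq_lintegral (hU_meas i₀) hW hT]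
  exact lintegral_congr hslice

theorem measure_gumbel_maximizer_eq {ι : Type*} {U : ι → Ω → ℝ} (hU : iIndepFun U μ)
    (hU_meas : ∀ i, Measurable (U i))
    (hU_cdf : ∀ i x, μ {ω | U i ω ≤ x} = ENNReal.ofReal (exp (-exp (-x))))
    {w : ι → ℝ} {C : Finset ι} (hw : ∀ i ∈ C, 0 < w i) {i₀ : ι} (hi₀ : i₀ ∈ C) :
    μ {ω | ∀ i ∈ C, log (w i) + U i ω ≤ log (w i₀) + U i₀ ω} =
      ENNReal.ofReal (w i₀ / ∑ i ∈ C, w i) := by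
  classical
  set s := C.erase i₀
  set q := ∑ i ∈ s, w i / w i₀
  have hw₀ := hw i₀ hi₀
  have hq : 0 ≤ q :=
    Finset.sum_nonneg fun i hi => (div_pos (hw i (Finset.mem_of_mem_erase hi)) hw₀).le
  have hq_eq : 1 + q = (∑ i ∈ C, w i) / w i₀ := by
    rw [← Finset.add_sum_erase C w hi₀, add_div, div_self hw₀.ne', Finset.sum_div]
  have hevent : {ω | ∀ i ∈ C, log (w i) + U i ω ≤ log (w i₀) + U i₀ ω} =
      {ω | ∀ i ∈ s, U i ω ≤ (log (w i₀) - log (w i)) + U i₀ ω} := by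
    ext ω
    refine ⟨fun h i hi => by linarith [h i (Finset.mem_of_mem_erase hi)], fun h i hi => ?_⟩
    rcases eq_or_ne i i₀ with rfl | hne
    · exact le_rfl
    · linarith [h i (Finset.mem_erase.2 ⟨hne, hi⟩)]
  have hfactor : ∀ x, ∏ i ∈ s, μ {ω | U i ω ≤ (log (w i₀) - log (w i)) + x} =
      ENNReal.ofReal (exp (-(q * exp (-x)))) := by
    intro x
    rw [Finset.prod_congr rfl fun i hi => by
        rw [hU_cdf, exp_neg_exp_neg_log_sub_log_add hw₀ (hw i (Finset.mem_of_mem_erase hi))],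
      ← ENNReal.ofReal_prod_of_nonneg fun _ _ => (exp_pos _).le, ← exp_sum, Finset.sum_neg_distrib,
      Finset.sum_mul]
  rw [hevent, hU.measure_forall_le_add_eq_lintegral hU_meas (Finset.notMem_erase i₀ C),
    lintegral_congr hfactor, map_eq_gumbelMeasure (hU_meas i₀) (hU_cdf i₀),
    lintegral_exp_neg_mul_exp_neg_gumbelMeasure (by linarith), hq_eq, one_div_div]

end ProbabilityTheory


theorem gumbel_max_trick_general
    {V : Type*}
    {Ω : Type*} [MeasurableSpace Ω] (μ : Measure Ω) [IsProbabilityMeasure μ]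
    (w : V → ℝ) (hw : ∀ t : V, 0 < w t)
    (C : Finset V) (hC : C.Nonempty)
    (U : V → Ω → ℝ)
    (hUmeas : ∀ t : V, Measurable (U t))
    -- the `U t` are independent ...
    (hindep : iIndepFun U μ)
    -- ... and each is standard Gumbel distributed (CDF `exp (−exp (−x))`)
    (hgumbel : ∀ (t : V) (x : ℝ),
      μ {ω | U t ω ≤ x} = ENNReal.ofReal (Real.exp (-Real.exp (-x)))) :
    -- almost surely, the maximizer over `C` of the perturbed log-weight is unique
    (∀ᵐ ω ∂μ, ∃! t : V, t ∈ C ∧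
      ∀ t' ∈ C, Real.log (w t') + U t' ω ≤ Real.log (w t) + U t ω) ∧
    -- and each `t₀ ∈ C` is the maximizer with probability `w t₀ / Σ_{t ∈ C} w t`
    (∀ t₀ ∈ C,
      μ {ω | ∀ t' ∈ C, Real.log (w t') + U t' ω ≤ Real.log (w t₀) + U t₀ ω} =
        ENNReal.ofReal (w t₀ / ∑ t ∈ C, w t)) := by
  set A : V → Set Ω := fun t => {ω | ∀ t' ∈ C, log (w t') + U t' ω ≤ log (w t) + U t ω}
  have hprob : ∀ t₀ ∈ C, μ (A t₀) = ENNReal.ofReal (w t₀ / ∑ t ∈ C, w t) := fun t₀ ht₀ =>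
    measure_gumbel_maximizer_eq hindep hUmeas hgumbel (fun t _ => hw t) ht₀
  refine ⟨?_, hprob⟩
  have hA : ∀ t ∈ C, MeasurableSet (A t) := fun t _ => by
    simp only [A, ofPred_forall]
    exact Finset.measurableSet_biInter C fun t' _ => measurableSet_le (by fun_prop) (by fun_prop)
  have hcover : ∀ ω, ∃ t ∈ C, ω ∈ A t := fun ω => C.exists_max_image _ hC
  have hpos : 0 < ∑ t ∈ C, w t := Finset.sum_pos (fun t _ => hw t) hC
  have hsum : ∑ t ∈ C, μ (A t) = μ univ := by
    rw [Finset.sum_congr rfl hprob,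
      ← ENNReal.ofReal_sum_of_nonneg fun t _ => (div_pos (hw t) hpos).le, ← Finset.sum_div,
      div_self hpos.ne', ENNReal.ofReal_one, measure_univ]
  exact ae_existsUnique_mem_of_sum_measure_eq hA hcover hsum

/-- the Gumbel-Max trick over a constrained subset. If `(U_t)_{t ∈ V}` are
i.i.d. standard Gumbel random variables and `w : V → (0, ∞)`, then almost surely the
maximizer over `t ∈ C` of `log (w t) + U t` is unique, and each `t₀ ∈ C` is the maximizer
with probability `w t₀ / Σ_{t ∈ C} w t`. -/
theorem gumbel_max_trick
    {V : Type*} [Fintype V] [Nonempty V]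
    {Ω : Type*} [MeasurableSpace Ω] (μ : Measure Ω) [IsProbabilityMeasure μ]
    (w : V → ℝ) (hw : ∀ t : V, 0 < w t)
    (C : Finset V) (hC : C.Nonempty)
    (U : V → Ω → ℝ)
    (hUmeas : ∀ t : V, Measurable (U t))
    -- the `U t` are independent ...
    (hindep : iIndepFun U μ)
    -- ... and each is standard Gumbel distributed (CDF `exp (−exp (−x))`)
    (hgumbel : ∀ (t : V) (x : ℝ),
      μ {ω | U t ω ≤ x} = ENNReal.ofReal (Real.exp (-Real.exp (-x)))) :
    -- almost surely, the maximizer over `C` of the perturbed log-weight is unique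
    (∀ᵐ ω ∂μ, ∃! t : V, t ∈ C ∧
      ∀ t' ∈ C, Real.log (w t') + U t' ω ≤ Real.log (w t) + U t ω) ∧
    -- and each `t₀ ∈ C` is the maximizer with probability `w t₀ / Σ_{t ∈ C} w t`
    (∀ t₀ ∈ C,
      μ {ω | ∀ t' ∈ C, Real.log (w t') + U t' ω ≤ Real.log (w t₀) + U t₀ ω} =
        ENNReal.ofReal (w t₀ / ∑ t ∈ C, w t)) :=
  gumbel_max_trick_general μ w hw C hC U hUmeas hindep hgumbel
end
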